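/- arXiv:1804.10111 — 10 statements merged into one kernel-verified Lean document; each statement's English description precedes it below -/
import Mathlib

section
/- Let Ξ be a C-symmetry on (H, η) and define Q := log(ηΞ) by functional calculus on the strictly positive operator ηΞ. Then Q is self-adjoint and anti-commutes with η: Qη + ηQ = 0. Conversely, if Q is bounded self-adjoint with Qη + ηQ = 0, then Ξ := η·exp(Q) is a C-symmetry (Ξ² = 1 and ηΞ > 0). These two maps are mutually inverse bijections between the set of C-symmetries and the set of bounded self-adjoint operators anti-commuting with η. -/
open ContinuousLinearMap

section aux

variable {H : Type*} [NormedAddCommGroup H] [InnerProductSpace ℂ H] [CompleteSpace H]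

/-- Conjugation by a self-inverse operator, as an algebra homomorphism. -/
noncomputable def conjAlgHom (η : H →L[ℂ] H) (hη : η * η = 1) :
    (H →L[ℂ] H) →ₐ[ℂ] (H →L[ℂ] H) where
  toFun x := η * x * η
  map_one' := by show η * 1 * η = 1; rw [mul_one, hη]
  map_mul' x y := by
    show η * (x * y) * η = (η * x * η) * (η * y * η)
    calc η * (x * y) * η = η * x * (η * η) * y * η := by rw [hη]; noncomm_ring
      _ = (η * x * η) * (η * y * η) := by noncomm_ring
  map_zero' := by show η * 0 * η = 0; simp
  map_add' x y := by show η * (x + y) * η = η * x * η + η * y * η; noncomm_ring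
  commutes' r := by
    show η * algebraMap ℂ (H →L[ℂ] H) r * η = algebraMap ℂ (H →L[ℂ] H) r
    simp only [Algebra.algebraMap_eq_smul_one]
    rw [mul_smul_comm, smul_mul_assoc, mul_one, hη]

lemma conjAlgHom_continuous (η : H →L[ℂ] H) (hη : η * η = 1) :
    Continuous (conjAlgHom η hη) := by
  have : Continuous fun x : H →L[ℂ] H => η * x * η := by
    exact ((continuous_mul_left η).comp continuous_id).mul continuous_const
  exact this

lemma conj_exp (η : H →L[ℂ] H) (hη : η * η = 1) (Q : H →L[ℂ] H) :
    η * NormedSpace.exp Q * η = NormedSpace.exp (η * Q * η) := by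
  letI : NormedAlgebra ℚ (H →L[ℂ] H) := .restrictScalars ℚ ℂ (H →L[ℂ] H)
  have := NormedSpace.map_exp (conjAlgHom η hη) (conjAlgHom_continuous η hη) Q
  simpa [conjAlgHom] using this

lemma exp_sa_injective {P Q : H →L[ℂ] H} (hP : IsSelfAdjoint P) (hQ : IsSelfAdjoint Q)
    (h : NormedSpace.exp P = NormedSpace.exp Q) : P = Q := by
  have hP' : NormedSpace.exp P = NormedSpace.exp P := by
    rfl
  have hQ' : NormedSpace.exp Q = NormedSpace.exp Q := by
    rfl
  have := congrArg CFC.log (hP'.trans (h.trans hQ'.symm))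
  rwa [CFC.log_exp P hP, CFC.log_exp Q hQ] at this

end aux

/-- On the Krein space `(H, η)`: (a) if `Ξ` is a C-symmetry and `Q` is the
self-adjoint logarithm of the strictly positive operator `ηΞ` (characterized by
`exp Q = ηΞ`), then `Q` anti-commutes with `η`; (b) conversely, if `Q` is bounded
self-adjoint with `Qη + ηQ = 0`, then `Ξ := η ∘ exp Q` is a C-symmetry (`Ξ² = 1` and `ηΞ`
strictly positive); (c) these assignments are mutually inverse bijections: every C-symmetry
`Ξ` arises from a *unique* self-adjoint `Q` anti-commuting with `η` via `Ξ = η ∘ exp Q`. -/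
theorem statement7
    {H : Type*} [NormedAddCommGroup H] [InnerProductSpace ℂ H] [CompleteSpace H]
    (η : H →L[ℂ] H) (hη_sa : IsSelfAdjoint η) (hη_inv : η ∘L η = 1) :
    -- (a)  Ξ ↦ Q(Ξ) = log(ηΞ) lands in the self-adjoint operators anti-commuting with η
    (∀ Ξ Q : H →L[ℂ] H, Ξ ∘L Ξ = 1 → (η ∘L Ξ).IsPositive → IsUnit (η ∘L Ξ) →
      IsSelfAdjoint Q → NormedSpace.exp Q = η ∘L Ξ →
        Q ∘L η + η ∘L Q = 0) ∧
    -- (b)  Q ↦ Ξ(Q) = η exp(Q) lands in the C-symmetries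
    (∀ Q : H →L[ℂ] H, IsSelfAdjoint Q → Q ∘L η + η ∘L Q = 0 →
      (η ∘L NormedSpace.exp Q) ∘L (η ∘L NormedSpace.exp Q) = 1 ∧
      (η ∘L (η ∘L NormedSpace.exp Q)).IsPositive ∧
      IsUnit (η ∘L (η ∘L NormedSpace.exp Q))) ∧
    -- (c)  the two maps are mutually inverse bijections
    (∀ Ξ : H →L[ℂ] H, Ξ ∘L Ξ = 1 → (η ∘L Ξ).IsPositive → IsUnit (η ∘L Ξ) →
      ∃! Q : H →L[ℂ] H, IsSelfAdjoint Q ∧ Q ∘L η + η ∘L Q = 0 ∧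
        η ∘L NormedSpace.exp Q = Ξ) := by
  have hη2 : η * η = 1 := hη_inv
  letI : NormedAlgebra ℚ (H →L[ℂ] H) := .restrictScalars ℚ ℂ (H →L[ℂ] H)
  -- Part (a)
  have partA : ∀ Ξ Q : H →L[ℂ] H, Ξ ∘L Ξ = 1 → (η ∘L Ξ).IsPositive → IsUnit (η ∘L Ξ) →
      IsSelfAdjoint Q → NormedSpace.exp Q = η ∘L Ξ → Q ∘L η + η ∘L Q = 0 := by
    intro Ξ Q hΞ2 hpos hunit hQ hexp
    have hΞ2' : Ξ * Ξ = 1 := hΞ2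
    have hexp' : NormedSpace.exp Q = η * Ξ := hexp
    -- exp (η Q η) = η exp Q η = η (η Ξ) η = Ξ η
    have h1 : NormedSpace.exp (η * Q * η) = Ξ * η := by
      rw [← conj_exp η hη2, hexp']
      calc η * (η * Ξ) * η = (η * η) * Ξ * η := by noncomm_ring
        _ = Ξ * η := by rw [hη2, one_mul]
    -- exp (-Q) = Ξ η as well
    have h2 : NormedSpace.exp (-Q) = Ξ * η := by
      have hmul : NormedSpace.exp (-Q) * NormedSpace.exp Q = 1 := by
        rw [← NormedSpace.exp_add_of_commute (Commute.refl Q).neg_left, neg_add_cancel,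
          NormedSpace.exp_zero]
      have hmul2 : (η * Ξ) * (Ξ * η) = 1 := by
        calc (η * Ξ) * (Ξ * η) = η * (Ξ * Ξ) * η := by noncomm_ring
          _ = 1 := by rw [hΞ2', mul_one, hη2]
      calc NormedSpace.exp (-Q) = NormedSpace.exp (-Q) * ((η * Ξ) * (Ξ * η)) := by
            rw [hmul2, mul_one]
        _ = (NormedSpace.exp (-Q) * NormedSpace.exp Q) * (Ξ * η) := by
            rw [hexp']; noncomm_ring
        _ = Ξ * η := by rw [hmul, one_mul]
    have hsa1 : IsSelfAdjoint (η * Q * η) := by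
      simpa [hη_sa.star_eq] using hQ.conjugate η
    have hkey : η * Q * η = -Q :=
      exp_sa_injective hsa1 hQ.neg (h1.trans h2.symm)
    have h3 : Q * η = -(η * Q) := by
      have h4 := congrArg (fun x => η * x) hkey
      simp only [mul_neg] at h4
      calc Q * η = η * (η * Q * η) := by
            rw [show η * (η * Q * η) = (η * η) * Q * η by noncomm_ring, hη2, one_mul]
        _ = -(η * Q) := h4
    exact add_eq_zero_iff_eq_neg.mpr h3
  refine ⟨partA, ?_, ?_⟩
  · -- Part (b)
    intro Q hQ hanti
    have hanti' : Q * η + η * Q = 0 := hanti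
    have hconj : η * Q * η = -Q := by
      have h := congrArg (fun x => η * x) hanti'
      simp only [mul_add, mul_zero] at h
      rw [← mul_assoc] at h
      rw [show η * (η * Q) = Q by rw [← mul_assoc, hη2, one_mul]] at h
      exact eq_neg_of_add_eq_zero_left h
    have hexpconj : η * NormedSpace.exp Q * η = NormedSpace.exp (-Q) := by
      rw [conj_exp η hη2, hconj]
    have hsq : (η * NormedSpace.exp Q) * (η * NormedSpace.exp Q) = 1 := by
      calc (η * NormedSpace.exp Q) * (η * NormedSpace.exp Q)
          = (η * NormedSpace.exp Q * η) * NormedSpace.exp Q := by noncomm_ring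
        _ = NormedSpace.exp (-Q) * NormedSpace.exp Q := by rw [hexpconj]
        _ = 1 := by
            rw [← NormedSpace.exp_add_of_commute (Commute.refl Q).neg_left, neg_add_cancel,
              NormedSpace.exp_zero]
    have hsimp : η ∘L (η ∘L NormedSpace.exp Q) = NormedSpace.exp Q := by
      rw [← comp_assoc, hη_inv]; exact one_mul _
    refine ⟨hsq, ?_, ?_⟩
    · rw [hsimp, ← nonneg_iff_isPositive]
      exact hQ.exp_nonneg
    · rw [hsimp]
      exact NormedSpace.isUnit_exp Q
  · -- Part (c)
    intro Ξ hΞ2 hpos hunit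
    set a : H →L[ℂ] H := η ∘L Ξ with ha
    have ha_sa : IsSelfAdjoint a := hpos.isSelfAdjoint
    have ha_nonneg : 0 ≤ a := (nonneg_iff_isPositive a).mpr hpos
    have hspec : ∀ x ∈ spectrum ℝ a, 0 < x := by
      intro x hx
      rcases lt_or_eq_of_le (spectrum_nonneg_of_nonneg ha_nonneg hx) with h | h
      · exact h
      · exact absurd (h ▸ hx) (spectrum.zero_notMem ℝ hunit)
    refine ⟨CFC.log a, ⟨?_, ?_, ?_⟩, ?_⟩
    · exact IsSelfAdjoint.log
    · -- anticommutation, via part (a)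
      apply partA Ξ (CFC.log a) hΞ2 hpos hunit IsSelfAdjoint.log
      exact CFC.exp_log a (IsStrictlyPositive.iff_of_unital.mpr ⟨ha_nonneg, hunit⟩)
    · -- η exp(log a) = Ξ
      have hexp : NormedSpace.exp (CFC.log a) = a := by
        exact CFC.exp_log a (IsStrictlyPositive.iff_of_unital.mpr ⟨ha_nonneg, hunit⟩)
      calc η ∘L NormedSpace.exp (CFC.log a) = η ∘L (η ∘L Ξ) := by rw [hexp]
        _ = Ξ := by rw [← comp_assoc, hη_inv]; exact one_mul _
    · -- uniqueness
      intro Q ⟨hQsa, hQanti, hQexp⟩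
      have hexp : NormedSpace.exp (CFC.log a) = a := by
        exact CFC.exp_log a (IsStrictlyPositive.iff_of_unital.mpr ⟨ha_nonneg, hunit⟩)
      apply exp_sa_injective hQsa IsSelfAdjoint.log
      rw [hexp]
      -- exp Q = η Ξ : from η ∘ exp Q = Ξ
      have : η ∘L (η ∘L NormedSpace.exp Q) = η ∘L Ξ := by rw [hQexp]
      rw [← comp_assoc, hη_inv] at this
      rwa [show (1 : H →L[ℂ] H).comp (NormedSpace.exp Q) = NormedSpace.exp Q from one_mul _] at this
end

section
/- For a strictly positive bounded operator ηΞ with Ξ a C-symmetry on (H, η), one has (ηΞ)⁻¹ = η(ηΞ)η; consequently the spectrum σ(ηΞ) satisfies: λ ∈ σ(ηΞ) if and only if λ⁻¹ ∈ σ(ηΞ). In particular ‖ηΞ‖ ≥ 1 and σ(ηΞ) ⊆ [‖Ξ‖⁻¹, ‖Ξ‖]. -/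
open ContinuousLinearMap

/-- For a C-symmetry `Ξ` on `(H, η)`, the strictly positive operator `ηΞ`
satisfies `(ηΞ)⁻¹ = η (ηΞ) η`; consequently `λ ∈ σ(ηΞ) ↔ λ⁻¹ ∈ σ(ηΞ)`, `‖ηΞ‖ ≥ 1` and
`σ(ηΞ) ⊆ [‖Ξ‖⁻¹, ‖Ξ‖]` (as a subset of ℝ ⊂ ℂ). -/
theorem statement8
    {H : Type*} [NormedAddCommGroup H] [InnerProductSpace ℂ H] [CompleteSpace H] [Nontrivial H]
    (η : H →L[ℂ] H) (hη_sa : IsSelfAdjoint η) (hη_inv : η ∘L η = 1)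
    (Ξ : H →L[ℂ] H) (hΞ_inv : Ξ ∘L Ξ = 1)
    (hpos : (η ∘L Ξ).IsPositive) (hunit : IsUnit (η ∘L Ξ)) :
    (η ∘L Ξ) ∘L (η ∘L (η ∘L Ξ) ∘L η) = 1 ∧ (η ∘L (η ∘L Ξ) ∘L η) ∘L (η ∘L Ξ) = 1 ∧
    (∀ lam : ℂ, lam ∈ spectrum ℂ (η ∘L Ξ) ↔ lam⁻¹ ∈ spectrum ℂ (η ∘L Ξ)) ∧
    1 ≤ ‖η ∘L Ξ‖ ∧
    spectrum ℂ (η ∘L Ξ) ⊆ Complex.ofReal '' Set.Icc (‖Ξ‖⁻¹) ‖Ξ‖ := by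
  set T := η ∘L Ξ with hT
  have hηη : ∀ x, η (η x) = x := fun x => by
    have := congrArg (fun f : H →L[ℂ] H => f x) hη_inv
    simpa using this
  have hΞΞ : ∀ x, Ξ (Ξ x) = x := fun x => by
    have := congrArg (fun f : H →L[ℂ] H => f x) hΞ_inv
    simpa using this
  have h1 : T ∘L (η ∘L T ∘L η) = 1 := by
    ext x
    simp [hT, hηη, hΞΞ]
  have h2 : (η ∘L T ∘L η) ∘L T = 1 := by
    ext x
    simp [hT, hηη, hΞΞ]
  -- units
  have hη_mul : η * η = 1 := hη_inv
  let uη : (H →L[ℂ] H)ˣ := ⟨η, η, hη_mul, hη_mul⟩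
  let uT : (H →L[ℂ] H)ˣ := ⟨T, η ∘L T ∘L η, h1, h2⟩
  -- spectrum of conjugate
  have hσ : spectrum ℂ (η ∘L T ∘L η) = spectrum ℂ T := by
    have h := spectrum.units_conjugate (R := ℂ) (a := T) (u := uη)
    have he : (↑uη * T * ↑uη⁻¹ : H →L[ℂ] H) = η ∘L T ∘L η := rfl
    rwa [he] at h
  -- norm of η is 1
  have hnη : ‖η‖ = 1 := by
    have h := CStarRing.norm_star_mul_self (x := η)
    rw [hη_sa.star_eq, hη_mul, norm_one] at h
    rcases mul_self_eq_one_iff.mp h.symm with h' | h'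
    · exact h'
    · nlinarith [norm_nonneg η]
  have hnS : ‖η ∘L T ∘L η‖ ≤ ‖T‖ := by
    calc ‖η ∘L T ∘L η‖ ≤ ‖η‖ * ‖T ∘L η‖ := opNorm_comp_le _ _
      _ ≤ ‖η‖ * (‖T‖ * ‖η‖) :=
          mul_le_mul_of_nonneg_left (opNorm_comp_le _ _) (norm_nonneg η)
      _ = ‖T‖ := by rw [hnη]; ring
  have hTΞ : ‖T‖ ≤ ‖Ξ‖ := by
    calc ‖T‖ ≤ ‖η‖ * ‖Ξ‖ := opNorm_comp_le _ _
      _ = ‖Ξ‖ := by rw [hnη, one_mul]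
  have hn1 : 1 ≤ ‖T‖ := by
    have h := opNorm_comp_le T (η ∘L T ∘L η)
    rw [h1, norm_one] at h
    nlinarith [norm_nonneg T]
  -- forward spectral symmetry
  have hforward : ∀ μ : ℂ, μ ∈ spectrum ℂ T → μ⁻¹ ∈ spectrum ℂ T := by
    intro μ hμ
    have hne : μ ≠ 0 := spectrum.ne_zero_of_mem_of_unit (a := uT) hμ
    have h := (spectrum.inv_mem_iff (R := ℂ) (r := Units.mk0 μ hne) (a := uT)).mp hμ
    have he : (↑uT⁻¹ : H →L[ℂ] H) = η ∘L T ∘L η := rfl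
    rw [he, hσ] at h
    simpa using h
  have hiff : ∀ lam : ℂ, lam ∈ spectrum ℂ T ↔ lam⁻¹ ∈ spectrum ℂ T := by
    intro lam
    exact ⟨hforward lam, fun h => by simpa [inv_inv] using hforward _ h⟩
  refine ⟨h1, h2, hiff, hn1, ?_⟩
  -- spectrum inclusion
  intro z hz
  have hre : z = (z.re : ℂ) := hpos.isSelfAdjoint.mem_spectrum_eq_re hz
  set r : ℝ := z.re with hr
  have hzr : z = (r : ℝ) := hre
  have hrmem : (r : ℂ) ∈ spectrum ℂ T := hre ▸ hz
  have hrℝ : r ∈ spectrum ℝ T := by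
    have := (spectrum.algebraMap_mem_iff ℂ (a := T) (r := r)).mp (by
      simpa [Complex.coe_algebraMap] using hrmem)
    exact this
  have hr0 : 0 ≤ r :=
    spectrum_nonneg_of_nonneg ((nonneg_iff_isPositive T).mpr hpos) hrℝ
  have hrne : r ≠ 0 := by
    have := spectrum.ne_zero_of_mem_of_unit (a := uT) hrmem
    exact_mod_cast fun h => this (by exact_mod_cast h)
  have hrpos : 0 < r := lt_of_le_of_ne hr0 (Ne.symm hrne)
  have hΞpos : 0 < ‖Ξ‖ := lt_of_lt_of_le zero_lt_one (le_trans hn1 hTΞ)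
  -- upper bound
  have hupper : r ≤ ‖Ξ‖ := by
    have h := spectrum.norm_le_norm_of_mem hrmem
    rw [Complex.norm_real, Real.norm_eq_abs, abs_of_nonneg hr0] at h
    exact h.trans hTΞ
  -- lower bound
  have hinv_mem : ((r : ℂ))⁻¹ ∈ spectrum ℂ T := hforward _ hrmem
  have hinv : r⁻¹ ≤ ‖Ξ‖ := by
    have h := spectrum.norm_le_norm_of_mem hinv_mem
    rw [← Complex.ofReal_inv, Complex.norm_real, Real.norm_eq_abs, abs_of_nonneg (inv_nonneg.mpr hr0)] at h
    exact h.trans hTΞ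
  have hlower : ‖Ξ‖⁻¹ ≤ r := by
    have hmul : r * r⁻¹ = 1 := mul_inv_cancel₀ hrne
    have hmul2 : ‖Ξ‖ * ‖Ξ‖⁻¹ = 1 := mul_inv_cancel₀ (ne_of_gt hΞpos)
    nlinarith
  exact ⟨r, ⟨hlower, hupper⟩, hzr.symm⟩
end

section
/- Let Ξ be a C-symmetry on the Krein space (H, η) and let G_Ξ := √(ηΞ) (positive square root via functional calculus). Then G_Ξ is self-adjoint, invertible with G_Ξ⁻¹ = η G_Ξ η (hence η-unitary), and G_Ξ Ξ G_Ξ⁻¹ = η. -/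
open ContinuousLinearMap

set_option maxHeartbeats 1000000
set_option synthInstance.maxHeartbeats 400000

/-- Let `Ξ` be a C-symmetry on the Krein space `(H, η)` and let
`G = √(ηΞ)` be the positive square root of the strictly positive operator `ηΞ`.  Then `G` is
self-adjoint, invertible with `G⁻¹ = η G η` (hence `η`-unitary), and `G Ξ G⁻¹ = η`. -/
theorem statement9
    {H : Type*} [NormedAddCommGroup H] [InnerProductSpace ℂ H] [CompleteSpace H]
    (η : H →L[ℂ] H) (hη_sa : IsSelfAdjoint η) (hη_inv : η ∘L η = 1)
    (Ξ : H →L[ℂ] H) (hΞ_inv : Ξ ∘L Ξ = 1)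
    (hpos : (η ∘L Ξ).IsPositive) (hunit : IsUnit (η ∘L Ξ))
    -- `G` is the positive square root of `ηΞ`
    (G : H →L[ℂ] H) (hG_pos : G.IsPositive) (hG_sq : G ∘L G = η ∘L Ξ) :
    IsSelfAdjoint G ∧
    G ∘L (η ∘L G ∘L η) = 1 ∧ (η ∘L G ∘L η) ∘L G = 1 ∧
    (G ∘L Ξ) ∘L (η ∘L G ∘L η) = η := by
  have hGsa : IsSelfAdjoint G := hG_pos.isSelfAdjoint
  -- switch to multiplicative notation
  have hη2 : η * η = 1 := hη_inv
  have hΞ2 : Ξ * Ξ = 1 := hΞ_inv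
  have hGG : G * G = η * Ξ := hG_sq
  -- (η Ξ)⁻¹ = Ξ η
  have hAinv : (η * Ξ) * (Ξ * η) = 1 := by
    calc (η * Ξ) * (Ξ * η) = η * (Ξ * Ξ) * η := by simp only [mul_assoc]
    _ = 1 := by rw [hΞ2, mul_one, hη2]
  have hAinv' : (Ξ * η) * (η * Ξ) = 1 := by
    calc (Ξ * η) * (η * Ξ) = Ξ * (η * η) * Ξ := by simp only [mul_assoc]
    _ = 1 := by rw [hη2, mul_one, hΞ2]
  -- Gi := G * (Ξ η) is a two-sided inverse of G
  set Gi : H →L[ℂ] H := G * (Ξ * η) with hGi_def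
  have h_right : G * Gi = 1 := by
    rw [hGi_def, ← mul_assoc, hGG, hAinv]
  have h_leftcand : ((Ξ * η) * G) * G = 1 := by
    rw [mul_assoc, hGG, hAinv']
  have h_eq : (Ξ * η) * G = Gi := by
    calc (Ξ * η) * G = ((Ξ * η) * G) * (G * Gi) := by rw [h_right, mul_one]
    _ = (((Ξ * η) * G) * G) * Gi := by simp only [mul_assoc]
    _ = Gi := by rw [h_leftcand, one_mul]
  have h_left : Gi * G = 1 := by rw [← h_eq, h_leftcand]
  -- Gi is self-adjoint
  have hGi_sa : IsSelfAdjoint Gi := by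
    have h1 : star Gi * G = 1 := by
      have := congrArg star h_right
      rwa [star_mul, hGsa.star_eq, star_one] at this
    calc star Gi = star Gi * (G * Gi) := by rw [h_right, mul_one]
    _ = (star Gi * G) * Gi := by rw [mul_assoc]
    _ = Gi := by rw [h1, one_mul]
  -- Gi is positive
  have hGi_pos : Gi.IsPositive := by
    refine ⟨ContinuousLinearMap.isSelfAdjoint_iff_isSymmetric.mp hGi_sa, fun x => ?_⟩
    have hx : x = G (Gi x) := by
      have := congrArg (fun T : H →L[ℂ] H => T x) h_right
      simpa using this.symm
    have : Gi.reApplyInnerSelf x = G.reApplyInnerSelf (Gi x) := by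
      rw [reApplyInnerSelf, reApplyInnerSelf]
      conv_lhs => rw [hx]
      have h2 : Gi (G (Gi x)) = Gi x := by
        have := congrArg (fun T : H →L[ℂ] H => T (Gi x)) h_left
        simpa using this
      rw [h2]
      conv_rhs => rw [← inner_conj_symm]
      rw [RCLike.conj_re]
    rw [this]
    exact hG_pos.2 _
  -- Gi * Gi = Ξ * η
  have hGiGi : Gi * Gi = Ξ * η := by
    calc Gi * Gi = Gi * (G * (Ξ * η)) := by rw [hGi_def]
    _ = (Gi * G) * (Ξ * η) := by simp only [mul_assoc]
    _ = Ξ * η := by rw [h_left, one_mul]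
  -- B := η G η is positive with B * B = Ξ * η
  set B : H →L[ℂ] H := η ∘L G ∘L η with hB_def
  have hB_pos : B.IsPositive := by
    have := hG_pos.conj_adjoint η
    rwa [← star_eq_adjoint, hη_sa.star_eq] at this
  have hBB : B * B = Ξ * η := by
    show (η * (G * η)) * (η * (G * η)) = Ξ * η
    calc (η * (G * η)) * (η * (G * η))
        = η * (G * ((η * η) * (G * η))) := by simp only [mul_assoc]
    _ = η * ((G * G) * η) := by rw [hη2, one_mul]; simp only [mul_assoc]
    _ = (η * (η * Ξ)) * η := by rw [hGG]; simp only [mul_assoc]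
    _ = ((η * η) * Ξ) * η := by simp only [mul_assoc]
    _ = Ξ * η := by rw [hη2, one_mul]
  -- uniqueness of positive square roots: B = Gi
  have hB_eq : B = Gi := by
    have h1 : CFC.sqrt (Ξ * η) = B :=
      CFC.sqrt_unique hBB ((nonneg_iff_isPositive B).mpr hB_pos)
    have h2 : CFC.sqrt (Ξ * η) = Gi :=
      CFC.sqrt_unique hGiGi ((nonneg_iff_isPositive Gi).mpr hGi_pos)
    rw [← h1, h2]
  refine ⟨hGsa, ?_, ?_, ?_⟩
  · show G * B = 1
    rw [hB_eq, h_right]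
  · show B * G = 1
    rw [hB_eq, h_left]
  · -- G Ξ B = η
    show (G * Ξ) * B = η
    have hΞ_eq : Ξ = η * (G * G) := by rw [hGG, ← mul_assoc, hη2, one_mul]
    have hηGi : η * Gi = G * η := by
      rw [← hB_eq]
      show η * (η * (G * η)) = G * η
      rw [← mul_assoc, hη2, one_mul]
    calc (G * Ξ) * B = (G * (η * (G * G))) * Gi := by rw [hΞ_eq, hB_eq]
    _ = (G * η) * (G * (G * Gi)) := by simp only [mul_assoc]
    _ = (G * η) * G := by rw [h_right, mul_one]
    _ = (η * Gi) * G := by rw [hηGi]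
    _ = η := by rw [mul_assoc, h_left, mul_one]
end

section
/- Let H be a bounded η-self-adjoint operator commuting with a C-symmetry Ξ (ΞH = HΞ), and G_Ξ := √(ηΞ). Then H̃ := G_Ξ H G_Ξ⁻¹ is self-adjoint (H̃ = H̃*) and commutes with η (H̃η = ηH̃). -/
open ContinuousLinearMap

/-- Let `H₀` be a bounded `η`-self-adjoint operator commuting with a
C-symmetry `Ξ`, and `G = √(ηΞ)` (positive square root, with inverse `G⁻¹ = η G η`).  Then
`H̃ = G H₀ G⁻¹` is self-adjoint and commutes with `η`. -/
theorem statement10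
    {H : Type*} [NormedAddCommGroup H] [InnerProductSpace ℂ H] [CompleteSpace H]
    (η : H →L[ℂ] H) (hη_sa : IsSelfAdjoint η) (hη_inv : η ∘L η = 1)
    (Ξ : H →L[ℂ] H) (hΞ_inv : Ξ ∘L Ξ = 1)
    (hpos : (η ∘L Ξ).IsPositive) (hunit : IsUnit (η ∘L Ξ))
    (H₀ : H →L[ℂ] H) (hH₀ : H₀ = η ∘L (adjoint H₀) ∘L η) (hcomm : Ξ ∘L H₀ = H₀ ∘L Ξ)
    (G : H →L[ℂ] H) (hG_pos : G.IsPositive) (hG_sq : G ∘L G = η ∘L Ξ)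
    (Ginv : H →L[ℂ] H) (hGinv : Ginv = η ∘L G ∘L η)
    (hG_inv : G ∘L Ginv = 1 ∧ Ginv ∘L G = 1) :
    IsSelfAdjoint ((G ∘L H₀) ∘L Ginv) ∧
    ((G ∘L H₀) ∘L Ginv) ∘L η = η ∘L ((G ∘L H₀) ∘L Ginv) := by
  obtain ⟨h1, h2⟩ := hG_inv
  simp only [← ContinuousLinearMap.mul_def] at *
  have aη : star η = η := hη_sa
  have aG : star G = G := hG_pos.isSelfAdjoint
  have aGinv : star Ginv = Ginv := by
    rw [hGinv]; simp [star_mul, mul_assoc, aη, aG]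
  have aH₀ : star H₀ = η * (H₀ * η) := by
    conv_lhs => rw [hH₀]
    simp [star_mul, mul_assoc, aη, star_eq_adjoint, adjoint_adjoint]
  have L1 : Ginv * η = η * G := by
    rw [hGinv, mul_assoc, mul_assoc, hη_inv, mul_one]
  have key0 : G * (G * Ξ) = η := by
    rw [← mul_assoc, hG_sq, mul_assoc, hΞ_inv, mul_one]
  have L2 : G * Ξ = η * G := by
    have h := congrArg (Ginv * ·) key0
    simp only [← mul_assoc, h2, one_mul] at h
    rw [h]; exact L1
  have L3 : Ξ = Ginv * η * G := by
    have h := congrArg (Ginv * ·) L2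
    simp only [← mul_assoc, h2, one_mul] at h
    exact h
  have L4 : Ξ * G = Ginv * Ξ := by
    conv_lhs => rw [L3]
    simp only [mul_assoc]
    rw [hG_sq, ← mul_assoc η η, hη_inv, one_mul]
  have L5 : Ξ * Ginv = Ginv * η := by
    conv_lhs => rw [L3]
    simp only [mul_assoc]
    rw [h1, mul_one]
  constructor
  · show star (G * H₀ * Ginv) = G * H₀ * Ginv
    simp only [star_mul, aG, aGinv, aH₀, mul_assoc]
    rw [← mul_assoc Ginv η, L1, ← L2]
    simp only [mul_assoc]
    rw [← mul_assoc Ξ H₀, hcomm]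
    simp only [mul_assoc]
    rw [← mul_assoc Ξ G, L4]
    simp only [mul_assoc]
    rw [hΞ_inv, mul_one]
  · show G * H₀ * Ginv * η = η * (G * H₀ * Ginv)
    simp only [mul_assoc]
    rw [L1, ← mul_assoc η G, ← L2]
    simp only [mul_assoc]
    rw [← mul_assoc Ξ H₀, hcomm]
    simp only [mul_assoc]
    rw [L5, L2, L1]
end

section
/- Let H be a bounded η-self-adjoint operator on a Krein space (H, η) that admits a C-symmetry Ξ commuting with H. Then the spectrum of H is real: σ(H) ⊆ ℝ. -/
open ContinuousLinearMap

/-- A bounded `η`-self-adjoint operator `H₀` on the Krein space `(H, η)`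
admitting a C-symmetry `Ξ` commuting with it has real spectrum: `σ(H₀) ⊆ ℝ`. -/
theorem statement11
    {H : Type*} [NormedAddCommGroup H] [InnerProductSpace ℂ H] [CompleteSpace H]
    (η : H →L[ℂ] H) (hη_sa : IsSelfAdjoint η) (hη_inv : η ∘L η = 1)
    (H₀ : H →L[ℂ] H) (hH₀ : H₀ = η ∘L (adjoint H₀) ∘L η)
    (hC : ∃ Ξ : H →L[ℂ] H, Ξ ∘L Ξ = 1 ∧ (η ∘L Ξ).IsPositive ∧ IsUnit (η ∘L Ξ) ∧
      Ξ ∘L H₀ = H₀ ∘L Ξ) :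
    spectrum ℂ H₀ ⊆ Set.range Complex.ofReal := by
  obtain ⟨Ξ, hΞ2, hpos, hunit, hcomm⟩ := hC
  -- switch from `∘L` to `*`
  have hη2 : η * η = 1 := hη_inv
  have hcomm' : Ξ * H₀ = H₀ * Ξ := hcomm
  have hH₀' : H₀ = η * (adjoint H₀ * η) := hH₀
  set P : H →L[ℂ] H := η ∘L Ξ with hPdef
  have hPmul : P = η * Ξ := rfl
  have hP0 : 0 ≤ P := (nonneg_iff_isPositive P).mpr hpos
  have hPsa : IsSelfAdjoint P := .of_nonneg hP0
  -- adjoint of H₀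
  have hadj : adjoint H₀ = η * H₀ * η := by
    have h := congrArg (fun X => η * X * η) hH₀'
    change η * H₀ * η = η * (η * (adjoint H₀ * η)) * η at h
    rw [h, ← mul_assoc, ← mul_assoc, hη2, one_mul, mul_assoc (adjoint H₀), hη2, mul_one]
  -- the key intertwining relation
  have hPH : P * H₀ = adjoint H₀ * P := by
    have h1 : P * H₀ = η * (H₀ * Ξ) := by
      rw [hPmul, mul_assoc, hcomm']
    have h2 : adjoint H₀ * P = η * (H₀ * Ξ) := by
      rw [hPmul, hadj, mul_assoc (η * H₀) η, ← mul_assoc η η, hη2, one_mul, mul_assoc]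
    rw [h1, h2]
  -- the square root of P
  set S : H →L[ℂ] H := CFC.sqrt P with hSdef
  have hS0 : 0 ≤ S := CFC.sqrt_nonneg P
  have hSsa : IsSelfAdjoint S := .of_nonneg hS0
  have hSS : S * S = P := CFC.sqrt_mul_sqrt_self P hP0
  -- S is a unit
  have hu : (hunit.unit : H →L[ℂ] H) = P := hunit.unit_spec
  have hcomSP : Commute S (hunit.unit : H →L[ℂ] H) := by
    rw [hu, ← hSS]
    exact (Commute.refl S).mul_right (Commute.refl S)
  have hcomSPinv : Commute S ((hunit.unit⁻¹ : (H →L[ℂ] H)ˣ) : H →L[ℂ] H) :=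
    hcomSP.units_inv_right
  have hSunit : IsUnit S := by
    refine ⟨⟨S, S * (hunit.unit⁻¹ : (H →L[ℂ] H)ˣ), ?_, ?_⟩, rfl⟩
    · rw [← mul_assoc, hSS]
      exact hunit.mul_val_inv
    · rw [mul_assoc, ← hcomSPinv.eq, ← mul_assoc, hSS]
      exact hunit.mul_val_inv
  set w : (H →L[ℂ] H)ˣ := hSunit.unit with hwdef
  have hw : (w : H →L[ℂ] H) = S := hSunit.unit_spec
  -- star of w and its inverse
  have hstarw : star (w : H →L[ℂ] H) = w := by rw [hw]; exact hSsa
  have hstarwu : star w = w := Units.ext hstarw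
  have hstarwinv : star ((w⁻¹ : (H →L[ℂ] H)ˣ) : H →L[ℂ] H)
      = ((w⁻¹ : (H →L[ℂ] H)ˣ) : H →L[ℂ] H) := by
    rw [← Units.coe_star_inv, hstarwu]
  -- the key similarity identity
  have key : ((w⁻¹ : (H →L[ℂ] H)ˣ) : H →L[ℂ] H) * adjoint H₀ * (w : H →L[ℂ] H)
      = (w : H →L[ℂ] H) * H₀ * ((w⁻¹ : (H →L[ℂ] H)ˣ) : H →L[ℂ] H) := by
    rw [← Units.mul_left_inj w, ← Units.mul_right_inj w]
    simp only [mul_assoc, Units.mul_inv_cancel_left, Units.inv_mul, mul_one]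
    rw [hw]
    rw [← mul_assoc S S H₀, hSS]
    exact hPH.symm
  -- the conjugated operator is self-adjoint
  have hAsa : IsSelfAdjoint
      ((w : H →L[ℂ] H) * H₀ * ((w⁻¹ : (H →L[ℂ] H)ˣ) : H →L[ℂ] H)) := by
    rw [IsSelfAdjoint, star_mul, star_mul, hstarw, hstarwinv, star_eq_adjoint,
      ← mul_assoc]
    exact key
  -- conclude
  intro z hz
  have hspec : spectrum ℂ ((w : H →L[ℂ] H) * H₀ * ((w⁻¹ : (H →L[ℂ] H)ˣ) : H →L[ℂ] H))
      = spectrum ℂ H₀ := spectrum.units_conjugate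
  rw [← hspec] at hz
  exact ⟨z.re, (hAsa.mem_spectrum_eq_re hz).symm⟩
end

section
/- Let U be a bounded linear or anti-linear operator on a Krein space (H, η) satisfying the η-isometry relation ηU* = ℘(U) U⁻¹η with sign ℘(U) ∈ {±1} (and ℘(U⁻¹) = ℘(U)). If Ξ is a C-symmetry, then Ξ' := ℘(U)·UΞU⁻¹ is again a C-symmetry: Ξ'² = 1 and ηΞ' is strictly positive. Moreover, if H is η-self-adjoint and commutes with Ξ, then UHU⁻¹ commutes with Ξ'. -/
open ContinuousLinearMap

private lemma inner_real_smul_right' {H : Type*} [NormedAddCommGroup H]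
    [InnerProductSpace ℂ H] (r : ℝ) (x y : H) :
    (inner ℂ x (r • y) : ℂ) = (r : ℂ) * inner ℂ x y := by
  rw [RCLike.real_smul_eq_coe_smul (K := ℂ), inner_smul_right]; norm_cast

private lemma inner_real_smul_left' {H : Type*} [NormedAddCommGroup H]
    [InnerProductSpace ℂ H] (r : ℝ) (x y : H) :
    (inner ℂ (r • x) y : ℂ) = (r : ℂ) * inner ℂ x y := by
  rw [RCLike.real_smul_eq_coe_smul (K := ℂ), inner_smul_left, RCLike.conj_ofReal]; norm_cast

private lemma aux_pos_apply_eq_zero {H : Type*} [NormedAddCommGroup H]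
    [InnerProductSpace ℂ H] [CompleteSpace H]
    (T : H →L[ℂ] H) (hT : T.IsPositive) {ψ : H}
    (h : (inner ℂ ψ (T ψ) : ℂ).re = 0) : T ψ = 0 := by
  have hsa := hT.isSelfAdjoint
  have hsym : ∀ a b : H, (inner ℂ a (T b) : ℂ) = starRingEnd ℂ (inner ℂ b (T a)) := by
    intro a b
    calc (inner ℂ a (T b) : ℂ) = inner ℂ (ContinuousLinearMap.adjoint T a) b := by
          rw [ContinuousLinearMap.adjoint_inner_left]
      _ = inner ℂ (T a) b := by rw [hsa.adjoint_eq]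
      _ = starRingEnd ℂ (inner ℂ b (T a)) := by rw [inner_conj_symm]
  have hre : ∀ a : H, (inner ℂ a (T ψ) : ℂ).re = 0 := by
    intro a
    by_contra hb
    set b := (inner ℂ a (T ψ) : ℂ).re with hbdef
    set c := (inner ℂ a (T a) : ℂ).re with hcdef
    have key : ∀ t : ℝ, 0 ≤ c + 2 * t * b := by
      intro t
      have h0 := hT.re_inner_nonneg_right (a + t • ψ)
      have hTadd : T (a + t • ψ) = T a + t • T ψ := by
        rw [map_add, ContinuousLinearMap.map_smul_of_tower]
      have h2 : ((inner ℂ ψ (T a) : ℂ)).re = b := by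
        rw [hsym ψ a, Complex.conj_re]
      have hexp : (inner ℂ (a + t • ψ) (T (a + t • ψ)) : ℂ).re
          = c + 2 * t * b + t * t * (inner ℂ ψ (T ψ) : ℂ).re := by
        rw [hTadd, inner_add_left, inner_add_right, inner_add_right]
        simp only [inner_real_smul_left', inner_real_smul_right']
        simp only [Complex.add_re, Complex.mul_re, Complex.ofReal_re,
          Complex.ofReal_im, zero_mul, sub_zero, Complex.mul_im, add_zero]
        rw [h2]
        ring
      have h0' : 0 ≤ (inner ℂ (a + t • ψ) (T (a + t • ψ)) : ℂ).re := by
        exact h0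
      rw [hexp, h] at h0'
      nlinarith [h0']
    have hc0 : 0 ≤ c := by simpa using hT.re_inner_nonneg_right a
    have hval : c + 2 * (-(c + 1) / (2 * b)) * b = -1 := by
      field_simp
      ring
    linarith [hval ▸ key (-(c + 1) / (2 * b))]
  have hall : ∀ a : H, (inner ℂ a (T ψ) : ℂ) = 0 := by
    intro a
    have h1 : (inner ℂ a (T ψ) : ℂ).re = 0 := hre a
    have h2 : (inner ℂ a (T ψ) : ℂ).im = 0 := by
      have := hre (Complex.I • a)
      rw [inner_smul_left] at this
      simp only [Complex.conj_I, neg_mul, Complex.neg_re, Complex.mul_re,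
        Complex.I_re, Complex.I_im, zero_mul, one_mul, zero_sub, neg_neg] at this
      exact this
    exact Complex.ext h1 h2
  have := hall (T ψ)
  rwa [inner_self_eq_zero] at this

/-- Let `U` be a bounded invertible linear or anti-linear operator
(modelled as a real-linear operator, with `ϖ = ±1` discriminating ℂ-linearity from
ℂ-anti-linearity) on the Krein space `(H, η)` satisfying the `η`-isometry relation
`η U* = ℘ U⁻¹ η` with sign `℘ = ±1` (where `U*` is the real adjoint of `U`, which agrees
with the linear adjoint resp. the anti-linear adjoint `⟨φ, Uψ⟩ = ⟨ψ, U*φ⟩`).  If `Ξ` is a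
C-symmetry then `Ξ' = ℘ · U Ξ U⁻¹` is again a C-symmetry: `Ξ'² = 1` and `ηΞ'` is strictly
positive.  Moreover, if `H₀` is `η`-self-adjoint and commutes with `Ξ`, then `U H₀ U⁻¹`
commutes with `Ξ'`. -/
theorem statement12
    {H : Type*} [NormedAddCommGroup H] [InnerProductSpace ℂ H] [CompleteSpace H]
    (η : H →L[ℂ] H) (hη_sa : IsSelfAdjoint η) (hη_inv : η ∘L η = 1)
    (℘ ϖ : ℝ) (h℘ : ℘ = 1 ∨ ℘ = -1) (hϖ : ϖ = 1 ∨ ϖ = -1)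
    (U Uinv Ustar : H →L[ℝ] H)
    (hU_inv : ∀ ψ, U (Uinv ψ) = ψ) (hU_inv' : ∀ ψ, Uinv (U ψ) = ψ)
    -- `U` is ℂ-linear (`ϖ = 1`) or ℂ-anti-linear (`ϖ = -1`)
    (hU_semilinear : ∀ ψ, U (Complex.I • ψ) = ϖ • Complex.I • U ψ)
    -- `Ustar` is the (real) adjoint of `U`
    (hUstar : ∀ φ ψ : H, (inner ℂ (U φ) ψ : ℂ).re = (inner ℂ φ (Ustar ψ) : ℂ).re)
    -- the `η`-isometry relation `η U* = ℘ U⁻¹ η`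
    (hkey : ∀ ψ, η (Ustar ψ) = ℘ • Uinv (η ψ))
    -- `Ξ` is a C-symmetry
    (Ξ : H →L[ℂ] H) (hΞ_inv : Ξ ∘L Ξ = 1)
    (hpos : (η ∘L Ξ).IsPositive) (hunit : IsUnit (η ∘L Ξ))
    -- `Ξ' = ℘ · U Ξ U⁻¹`
    (Ξ' : H → H) (hΞ' : ∀ φ, Ξ' φ = ℘ • U (Ξ (Uinv φ))) :
    -- `Ξ'` is an involution
    (∀ φ, Ξ' (Ξ' φ) = φ) ∧
    -- `ηΞ'` is strictly positive
    (∀ φ : H, (inner ℂ φ (η (Ξ' φ)) : ℂ).im = 0 ∧ 0 ≤ (inner ℂ φ (η (Ξ' φ)) : ℂ).re) ∧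
    (∀ φ : H, φ ≠ 0 → 0 < (inner ℂ φ (η (Ξ' φ)) : ℂ).re) ∧
    -- if `H₀` is `η`-self-adjoint and commutes with `Ξ`, then `U H₀ U⁻¹` commutes with `Ξ'`
    (∀ H₀ : H →L[ℂ] H, H₀ = η ∘L (adjoint H₀) ∘L η → Ξ ∘L H₀ = H₀ ∘L Ξ →
      ∀ φ, Ξ' (U (H₀ (Uinv φ))) = U (H₀ (Uinv (Ξ' φ)))) := by
  have h℘2 : ℘ * ℘ = 1 := by rcases h℘ with h | h <;> simp [h]
  have hϖ2 : ϖ * ϖ = 1 := by rcases hϖ with h | h <;> simp [h]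
  have hη : ∀ ψ, η (η ψ) = ψ := by
    intro ψ
    have := congrArg (fun f => f ψ) hη_inv
    simpa using this
  have hΞ : ∀ ψ, Ξ (Ξ ψ) = ψ := by
    intro ψ
    have := congrArg (fun f => f ψ) hΞ_inv
    simpa using this
  -- Ustar in closed form
  have hUstar' : ∀ χ, Ustar χ = ℘ • η (Uinv (η χ)) := by
    intro χ
    have h2 := congrArg (fun x => η x) (hkey χ)
    simp only [ContinuousLinearMap.map_smul_of_tower] at h2
    rw [hη] at h2
    exact h2
  -- the key computation
  have main : ∀ a b : H, (inner ℂ (U a) (η (U b)) : ℂ).re = ℘ * (inner ℂ a (η b) : ℂ).re := by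
    intro a b
    rw [hUstar a (η (U b)), hUstar' (η (U b)), hη, hU_inv', inner_real_smul_right']
    simp [Complex.mul_re]
  -- the imaginary-part trick
  have him : ∀ x y : H, (inner ℂ x y : ℂ).im = (inner ℂ (Complex.I • x) y : ℂ).re := by
    intro x y
    rw [inner_smul_left]
    simp
  -- real part of ⟨φ, η Ξ' φ⟩
  have hre_main : ∀ φ : H,
      (inner ℂ φ (η (Ξ' φ)) : ℂ).re = (inner ℂ (Uinv φ) (η (Ξ (Uinv φ))) : ℂ).re := by
    intro φ
    obtain ⟨ψ, rfl⟩ : ∃ ψ, φ = U ψ := ⟨Uinv φ, (hU_inv φ).symm⟩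
    rw [hΞ' (U ψ), hU_inv', ContinuousLinearMap.map_smul_of_tower,
      inner_real_smul_right']
    simp only [Complex.mul_re, Complex.ofReal_re, Complex.ofReal_im, zero_mul, sub_zero]
    rw [main ψ (Ξ ψ), ← mul_assoc, h℘2, one_mul]
  -- ⟨ψ, (η∘Ξ)ψ⟩ is real
  have hT_real : ∀ ψ : H, (inner ℂ ψ (η (Ξ ψ)) : ℂ).im = 0 := by
    intro ψ
    have hsa := hpos.isSelfAdjoint
    have heq : (inner ℂ ψ ((η ∘L Ξ) ψ) : ℂ) = starRingEnd ℂ (inner ℂ ψ ((η ∘L Ξ) ψ)) := by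
      conv_lhs => rw [← hsa.adjoint_eq, ContinuousLinearMap.adjoint_inner_right,
        ← inner_conj_symm]
    have him0 := Complex.conj_eq_iff_im.mp heq.symm
    simpa using him0
  refine ⟨?_, ?_, ?_, ?_⟩
  · -- involution
    intro φ
    rw [hΞ' φ, hΞ' _]
    rw [map_smul, ContinuousLinearMap.map_smul_of_tower, map_smul, hU_inv', hΞ,
      smul_smul, h℘2, one_smul, hU_inv]
  · -- ηΞ' positive
    intro φ
    constructor
    · -- imaginary part vanishes
      obtain ⟨ψ, rfl⟩ : ∃ ψ, φ = U ψ := ⟨Uinv φ, (hU_inv φ).symm⟩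
      rw [hΞ' (U ψ), hU_inv', ContinuousLinearMap.map_smul_of_tower,
        inner_real_smul_right']
      simp only [Complex.mul_im, Complex.ofReal_re, Complex.ofReal_im, zero_mul, add_zero]
      have step1 : (inner ℂ (U ψ) (η (U (Ξ ψ))) : ℂ).im
          = ϖ * ℘ * (inner ℂ ψ (η (Ξ ψ)) : ℂ).im := by
        rw [him]
        have hI : Complex.I • U ψ = ϖ • U (Complex.I • ψ) := by
          rw [hU_semilinear, smul_smul ϖ ϖ, hϖ2, one_smul]
        rw [hI, inner_real_smul_left']
        simp only [Complex.mul_re, Complex.ofReal_re, Complex.ofReal_im, zero_mul, sub_zero]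
        rw [main (Complex.I • ψ) (Ξ ψ), ← him]
        ring
      rw [step1, hT_real]
      ring
    · rw [hre_main φ]
      have := hpos.re_inner_nonneg_right (Uinv φ)
      simpa using this
  · -- strict positivity
    intro φ hφ
    have hψ : Uinv φ ≠ 0 := by
      intro h0
      apply hφ
      rw [← hU_inv φ, h0, map_zero]
    rw [hre_main φ]
    have hnn : 0 ≤ (inner ℂ (Uinv φ) (η (Ξ (Uinv φ))) : ℂ).re := by
      have := hpos.re_inner_nonneg_right (Uinv φ)
      simpa using this
    rcases lt_or_eq_of_le hnn with h | h
    · exact h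
    · exfalso
      have hz : (η ∘L Ξ) (Uinv φ) = 0 := by
        apply aux_pos_apply_eq_zero _ hpos
        simpa using h.symm
      obtain ⟨u, hu⟩ := hunit
      apply hψ
      calc Uinv φ = (↑u⁻¹ * ↑u : H →L[ℂ] H) (Uinv φ) := by rw [u.inv_mul]; rfl
        _ = (↑u⁻¹ : H →L[ℂ] H) ((η ∘L Ξ) (Uinv φ)) := by rw [hu]; rfl
        _ = 0 := by rw [hz, map_zero]
  · -- commutation
    intro H₀ _ hcomm φ
    have hc : ∀ x, Ξ (H₀ x) = H₀ (Ξ x) := by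
      intro x
      have := congrArg (fun f => f x) hcomm
      simpa using this
    rw [hΞ' φ, hΞ' _]
    rw [hU_inv', map_smul, hU_inv', hc, ContinuousLinearMap.map_smul_of_tower, map_smul]
end

section
/- Let Ξ be a C-symmetry on (H, η), H a bounded η-self-adjoint operator with ΞH = HΞ, and U a bounded η-quantum symmetry of type (ϖ, ℘) (i.e., ηU* = ℘U⁻¹η) with UΞ = ℘ ΞU and U² = ε·1. Set G_Ξ := √(ηΞ) and Ũ := G_Ξ U G_Ξ⁻¹. Then Ũ is unitary (Ũ⁻¹ = Ũ*), satisfies Ũη = ℘ ηŨ, Ũ² = ε·1, and, if UH = cHU with c ∈ {±1}, then Ũ H̃ = c H̃ Ũ for H̃ := G_Ξ H G_Ξ⁻¹. -/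
open ContinuousLinearMap

/-- Let `Ξ` be a C-symmetry on `(H, η)`, `H₀` a bounded `η`-self-adjoint
operator with `ΞH₀ = H₀Ξ`, and `U` a bounded invertible linear or anti-linear `η`-quantum
symmetry of type `(ϖ, ℘)` (i.e. `η U* = ℘ U⁻¹ η`, with `U*` the (real) adjoint of `U`),
satisfying `UΞ = ℘ ΞU` and `U² = ε·1`.  With `G = √(ηΞ)` (so `G = G*`, `G² = ηΞ`,
`G⁻¹ = η G η`) and `Ũ = G U G⁻¹`, the operator `Ũ` is unitary (its real adjoint is its
inverse, equivalently it preserves the (real part of the) inner product), satisfies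
`Ũη = ℘ ηŨ` and `Ũ² = ε·1`, and if `UH₀ = c H₀U` then `Ũ H̃ = c H̃ Ũ` where
`H̃ = G H₀ G⁻¹`. -/
theorem statement13
    {H : Type*} [NormedAddCommGroup H] [InnerProductSpace ℂ H] [CompleteSpace H]
    (η : H →L[ℂ] H) (hη_sa : IsSelfAdjoint η) (hη_inv : η ∘L η = 1)
    -- the C-symmetry
    (Ξ : H →L[ℂ] H) (hΞ_inv : Ξ ∘L Ξ = 1)
    (hpos : (η ∘L Ξ).IsPositive) (hunit : IsUnit (η ∘L Ξ))
    -- the `η`-self-adjoint operator commuting with `Ξ`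
    (H₀ : H →L[ℂ] H) (hH₀ : H₀ = η ∘L (adjoint H₀) ∘L η) (hcomm : Ξ ∘L H₀ = H₀ ∘L Ξ)
    -- the signs
    (℘ ϖ ε c : ℝ) (h℘ : ℘ = 1 ∨ ℘ = -1) (hϖ : ϖ = 1 ∨ ϖ = -1)
    (hε : ε = 1 ∨ ε = -1) (hc : c = 1 ∨ c = -1)
    -- the `η`-quantum symmetry `U` of type `(ϖ, ℘)`
    (U Uinv Ustar : H →L[ℝ] H)
    (hU_inv : ∀ ψ, U (Uinv ψ) = ψ) (hU_inv' : ∀ ψ, Uinv (U ψ) = ψ)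
    (hU_semilinear : ∀ ψ, U (Complex.I • ψ) = ϖ • Complex.I • U ψ)
    (hUstar : ∀ φ ψ : H, (inner ℂ (U φ) ψ : ℂ).re = (inner ℂ φ (Ustar ψ) : ℂ).re)
    (hkey : ∀ ψ, η (Ustar ψ) = ℘ • Uinv (η ψ))
    -- `U` is an involution of parity `ε` and is `Ξ`-compatible
    (hU_invol : ∀ ψ, U (U ψ) = ε • ψ)
    (hUΞ : ∀ ψ, U (Ξ ψ) = ℘ • Ξ (U ψ))
    -- `G = √(ηΞ)` and its inverse
    (G : H →L[ℂ] H) (hG_pos : G.IsPositive) (hG_sq : G ∘L G = η ∘L Ξ)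
    (Ginv : H →L[ℂ] H) (hGinv : Ginv = η ∘L G ∘L η)
    (hG_inv : G ∘L Ginv = 1 ∧ Ginv ∘L G = 1)
    -- `Ũ = G U G⁻¹` and `H̃ = G H₀ G⁻¹`
    (Ut : H → H) (hUt : ∀ ψ, Ut ψ = G (U (Ginv ψ)))
    (Ht : H → H) (hHt : ∀ ψ, Ht ψ = G (H₀ (Ginv ψ))) :
    -- `Ũ` is unitary: it preserves the (real part of the) inner product
    (∀ φ ψ : H, (inner ℂ (Ut φ) (Ut ψ) : ℂ).re = (inner ℂ φ ψ : ℂ).re) ∧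
    -- `Ũ η = ℘ η Ũ`
    (∀ ψ, Ut (η ψ) = ℘ • η (Ut ψ)) ∧
    -- `Ũ² = ε·1`
    (∀ ψ, Ut (Ut ψ) = ε • ψ) ∧
    -- `U H₀ = c H₀ U` implies `Ũ H̃ = c H̃ Ũ`
    ((∀ ψ, U (H₀ ψ) = c • H₀ (U ψ)) → ∀ ψ, Ut (Ht ψ) = c • Ht (Ut ψ)) := by
  -- sign square
  have h℘2 : ∀ x : H, ℘ • ℘ • x = x := by
    intro x
    rcases h℘ with h | h <;> simp [h, smul_smul]
  -- pointwise identities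
  have hη2 : ∀ ψ, η (η ψ) = ψ := fun ψ => by
    have := DFunLike.congr_fun hη_inv ψ; simpa using this
  have hGG : ∀ ψ, G (Ginv ψ) = ψ := fun ψ => by
    have := DFunLike.congr_fun hG_inv.1 ψ; simpa using this
  have hGG' : ∀ ψ, Ginv (G ψ) = ψ := fun ψ => by
    have := DFunLike.congr_fun hG_inv.2 ψ; simpa using this
  have hG2 : ∀ ψ, G (G ψ) = η (Ξ ψ) := fun ψ => by
    have := DFunLike.congr_fun hG_sq ψ; simpa using this
  have hGinv' : ∀ ψ, Ginv ψ = η (G (η ψ)) := fun ψ => by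
    rw [hGinv]; simp
  -- G η G = η
  have hB : ∀ ψ, G (η (G ψ)) = η ψ := by
    intro ψ
    have h1 : η (G (η (G ψ))) = ψ := by rw [← hGinv']; exact hGG' ψ
    have h2 := congrArg η h1
    rwa [hη2] at h2
  -- Ξ = η G G
  have hΞdef : ∀ ψ, Ξ ψ = η (G (G ψ)) := by
    intro ψ
    have := congrArg η (hG2 ψ)
    rw [hη2] at this
    exact this.symm
  -- G Ξ = η G
  have e2 : ∀ ψ, G (Ξ ψ) = η (G ψ) := by
    intro ψ; rw [hΞdef ψ]; exact hB (G ψ)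
  -- Ginv η = Ξ Ginv
  have e3 : ∀ ψ, Ginv (η ψ) = Ξ (Ginv ψ) := by
    intro ψ
    rw [hGinv' (η ψ), hη2, hΞdef (Ginv ψ), hGG]
  -- Ξ U = ℘ U Ξ
  have hΞU : ∀ ψ, Ξ (U ψ) = ℘ • U (Ξ ψ) := by
    intro ψ
    have := congrArg (fun x => ℘ • x) (hUΞ ψ)
    simp only [h℘2] at this
    exact this.symm
  -- Ustar = ℘ η Uinv η
  have hUstar_eq : ∀ ψ, Ustar ψ = ℘ • η (Uinv (η ψ)) := by
    intro ψ
    have := congrArg η (hkey ψ)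
    rw [hη2] at this
    rw [this, map_smul_of_tower]
  -- self-adjointness of G
  have hGsa : ∀ x y : H, (inner ℂ (G x) y : ℂ) = inner ℂ x (G y) := by
    intro x y
    have h1 : adjoint G = G := hG_pos.isSelfAdjoint.adjoint_eq
    calc (inner ℂ (G x) y : ℂ) = inner ℂ ((adjoint G) x) y := by rw [h1]
      _ = inner ℂ x (G y) := ContinuousLinearMap.adjoint_inner_left G y x
  -- Key computation: Ustar (G (G (U x))) = η (Ξ x)
  have hkey2 : ∀ x : H, Ustar (G (G (U x))) = η (Ξ x) := by
    intro x
    rw [hG2 (U x), hΞU x, map_smul_of_tower, map_smul, hUstar_eq, hη2, hU_inv', h℘2]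
  constructor
  · -- unitarity
    intro φ ψ
    rw [hUt φ, hUt ψ]
    have step1 : (inner ℂ (G (U (Ginv φ))) (G (U (Ginv ψ))) : ℂ)
        = inner ℂ (U (Ginv φ)) (G (G (U (Ginv ψ)))) := hGsa _ _
    rw [step1, hUstar _ _, hkey2 (Ginv ψ), ← hG2 (Ginv ψ), hGG ψ, ← hGsa, hGG]
  refine ⟨?_, ?_, ?_⟩
  · -- Ut η = ℘ η Ut
    intro ψ
    rw [hUt (η ψ), hUt ψ, e3 ψ, hUΞ (Ginv ψ), map_smul_of_tower, e2]
  · -- Ut² = ε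
    intro ψ
    rw [hUt (Ut ψ), hUt ψ, hGG', hU_invol, map_smul_of_tower, hGG]
  · -- commutation
    intro hUH ψ
    rw [hUt (Ht ψ), hHt ψ, hGG', hUH, map_smul_of_tower, hHt (Ut ψ), hUt ψ, hGG']
end

section
/- Every 2×2 complex matrix U satisfying U*ηU = η, where η = diag(1, −1), has the form U(r,α,β,δ) with entries U₁₁ = e^{iα}√(1+r²), U₁₂ = e^{i(β+δ)} r, U₂₁ = e^{i(α−δ)} r, U₂₂ = e^{iβ}√(1+r²), for some r ≥ 0 and angles α, β, δ; moreover its operator norm is ‖U‖ = r + √(1+r²). -/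
open scoped Matrix.Norms.L2Operator Matrix
open Complex

lemma aux_norm14 (r α β δ : ℝ) (hr : 0 ≤ r) :
    ‖!![exp (α * I) * (Real.sqrt (1 + r ^ 2) : ℝ), exp ((β + δ) * I) * (r : ℝ);
       exp ((α - δ) * I) * (r : ℝ), exp (β * I) * (Real.sqrt (1 + r ^ 2) : ℝ)]‖
      = r + Real.sqrt (1 + r ^ 2) := by
  set s : ℝ := Real.sqrt (1 + r ^ 2) with hs
  set A : Matrix (Fin 2) (Fin 2) ℂ :=
    !![exp (α * I) * (s : ℝ), exp ((β + δ) * I) * (r : ℝ);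
       exp ((α - δ) * I) * (r : ℝ), exp (β * I) * (s : ℝ)] with hA
  have hsnn : 0 ≤ s := Real.sqrt_nonneg _
  have habsexp : ∀ z : ℂ, z.re = 0 → ‖exp z‖ = 1 := fun z h => by
    rw [Complex.norm_exp, h, Real.exp_zero]
  rw [Matrix.cstar_norm_def]
  set T := Matrix.toEuclideanCLM (n := Fin 2) (𝕜 := ℂ) A with hT
  have hval : ∀ x : EuclideanSpace ℂ (Fin 2), ∀ i, T x i = (A *ᵥ (fun j => x j)) i :=
    fun x i => rfl
  have hmv : ∀ x : EuclideanSpace ℂ (Fin 2),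
      (T x 0 = exp (α * I) * (s : ℝ) * x 0 + exp ((β + δ) * I) * (r : ℝ) * x 1) ∧
      (T x 1 = exp ((α - δ) * I) * (r : ℝ) * x 0 + exp (β * I) * (s : ℝ) * x 1) := by
    intro x
    constructor <;>
    · rw [hval]
      simp [Matrix.mulVec, dotProduct, Fin.sum_univ_two, hA]
  have hnorm2 : ∀ x : EuclideanSpace ℂ (Fin 2),
      ‖x‖ = Real.sqrt (‖x 0‖ ^ 2 + ‖x 1‖ ^ 2) := by
    intro x
    rw [EuclideanSpace.norm_eq]
    simp [Fin.sum_univ_two]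
  apply le_antisymm
  · apply ContinuousLinearMap.opNorm_le_bound T (by positivity)
    intro x
    rw [hnorm2 (T x), hnorm2 x]
    set u := ‖x 0‖ with hu
    set v := ‖x 1‖ with hv
    have hunn : 0 ≤ u := norm_nonneg _
    have hvnn : 0 ≤ v := norm_nonneg _
    have b0 : ‖T x 0‖ ≤ s * u + r * v := by
      rw [(hmv x).1]
      refine le_trans (norm_add_le _ _) ?_
      rw [norm_mul, norm_mul, norm_mul, norm_mul, habsexp _ (by simp), habsexp _ (by simp),
        Complex.norm_real, Complex.norm_real, Real.norm_eq_abs, Real.norm_eq_abs, _root_.abs_of_nonneg hsnn,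
        _root_.abs_of_nonneg hr, one_mul, one_mul]
    have b1 : ‖T x 1‖ ≤ r * u + s * v := by
      rw [(hmv x).2]
      refine le_trans (norm_add_le _ _) ?_
      rw [norm_mul, norm_mul, norm_mul, norm_mul, habsexp _ (by simp), habsexp _ (by simp),
        Complex.norm_real, Complex.norm_real, Real.norm_eq_abs, Real.norm_eq_abs, _root_.abs_of_nonneg hsnn,
        _root_.abs_of_nonneg hr, one_mul, one_mul]
    have b0' : ‖T x 0‖ ^ 2 ≤ (s * u + r * v) ^ 2 :=
      pow_le_pow_left₀ (norm_nonneg _) b0 2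
    have b1' : ‖T x 1‖ ^ 2 ≤ (r * u + s * v) ^ 2 :=
      pow_le_pow_left₀ (norm_nonneg _) b1 2
    have h1 : (r + s) * Real.sqrt (u ^ 2 + v ^ 2)
        = Real.sqrt ((r + s) ^ 2 * (u ^ 2 + v ^ 2)) := by
      rw [Real.sqrt_mul (by positivity), Real.sqrt_sq (by positivity)]
    rw [h1]
    apply Real.sqrt_le_sqrt
    nlinarith [mul_nonneg (mul_nonneg hr hsnn) (sq_nonneg (u - v))]
  · set x₀ : EuclideanSpace ℂ (Fin 2) :=
      (WithLp.equiv 2 (Fin 2 → ℂ)).symm ![exp ((β + δ - α) * I), 1] with hx₀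
    have hx0 : x₀ 0 = exp ((β + δ - α) * I) := rfl
    have hx1 : x₀ 1 = 1 := rfl
    have hnx : ‖x₀‖ = Real.sqrt 2 := by
      rw [hnorm2, hx0, hx1, habsexp _ (by simp)]
      norm_num
    have eexp0 : exp (α * I) * exp ((β + δ - α) * I) = exp ((β + δ) * I) := by
      rw [← Complex.exp_add]; ring_nf
    have eexp1 : exp ((α - δ) * I) * exp ((β + δ - α) * I) = exp (β * I) := by
      rw [← Complex.exp_add]; ring_nf
    have e0 : T x₀ 0 = exp ((β + δ) * I) * ((r : ℂ) + s) := by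
      rw [(hmv x₀).1, hx0, hx1]
      linear_combination (s : ℂ) * eexp0
    have e1 : T x₀ 1 = exp (β * I) * ((r : ℂ) + s) := by
      rw [(hmv x₀).2, hx0, hx1]
      linear_combination (r : ℂ) * eexp1
    have habsrs : ‖(r : ℂ) + s‖ = r + s := by
      rw [show ((r : ℂ) + s) = ((r + s : ℝ) : ℂ) by push_cast; ring, Complex.norm_real, Real.norm_eq_abs,
        _root_.abs_of_nonneg (by positivity)]
    have hnTx : ‖T x₀‖ = (r + s) * Real.sqrt 2 := by
      rw [hnorm2, e0, e1, norm_mul, norm_mul, habsexp _ (by simp), habsexp _ (by simp)]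
      rw [habsrs]
      rw [show (1 * (r + s)) ^ 2 + (1 * (r + s)) ^ 2 = (r + s) ^ 2 * 2 by ring,
        Real.sqrt_mul (by positivity), Real.sqrt_sq (by positivity)]
    have hle := T.le_opNorm x₀
    rw [hnTx, hnx] at hle
    have h2 : (0:ℝ) < Real.sqrt 2 := by positivity
    calc r + s = (r + s) * Real.sqrt 2 / Real.sqrt 2 := by field_simp
    _ ≤ ‖T‖ * Real.sqrt 2 / Real.sqrt 2 := by gcongr
    _ = ‖T‖ := by field_simp

/-- Every `2×2` complex matrix `U` with `U* η U = η`, where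
`η = diag(1, -1)`, has the form `U(r,α,β,δ)` with entries
`U₁₁ = e^{iα}√(1+r²)`, `U₁₂ = e^{i(β+δ)} r`, `U₂₁ = e^{i(α-δ)} r`, `U₂₂ = e^{iβ}√(1+r²)`
for some `r ≥ 0` and angles `α, β, δ ∈ [-π, π]`; moreover its (L²-)operator norm is
`‖U‖ = r + √(1+r²)`. -/
theorem statement14 (U : Matrix (Fin 2) (Fin 2) ℂ)
    (hU : Uᴴ * !![(1 : ℂ), 0; 0, -1] * U = !![(1 : ℂ), 0; 0, -1]) :
    ∃ (r α β δ : ℝ), 0 ≤ r ∧ α ∈ Set.Icc (-Real.pi) Real.pi ∧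
      β ∈ Set.Icc (-Real.pi) Real.pi ∧ δ ∈ Set.Icc (-Real.pi) Real.pi ∧
      U = !![exp (α * I) * (Real.sqrt (1 + r ^ 2) : ℝ), exp ((β + δ) * I) * (r : ℝ);
             exp ((α - δ) * I) * (r : ℝ), exp (β * I) * (Real.sqrt (1 + r ^ 2) : ℝ)] ∧
      ‖U‖ = r + Real.sqrt (1 + r ^ 2) := by
  have h00 : (Uᴴ * !![(1 : ℂ), 0; 0, -1] * U) 0 0 = 1 := by rw [hU]; simp
  have h01 : (Uᴴ * !![(1 : ℂ), 0; 0, -1] * U) 0 1 = 0 := by rw [hU]; simp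
  have h11 : (Uᴴ * !![(1 : ℂ), 0; 0, -1] * U) 1 1 = -1 := by rw [hU]; simp
  simp only [Matrix.mul_apply, Fin.sum_univ_two, Matrix.conjTranspose_apply,
    Matrix.of_apply, Matrix.cons_val', Matrix.cons_val_zero, Matrix.cons_val_one,
    Matrix.head_cons, Matrix.empty_val', Matrix.cons_val_fin_one, Matrix.head_fin_const,
    mul_one, mul_zero, mul_neg, add_zero, zero_add, mul_neg_one, RCLike.star_def] at h00 h01 h11
  set a := U 0 0 with ha_def; set b := U 0 1 with hb_def
  set c := U 1 0 with hc_def; set d := U 1 1 with hd_def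
  have hn1 : Complex.normSq a = 1 + Complex.normSq c := by
    have h : (Complex.normSq a : ℂ) = 1 + Complex.normSq c := by
      rw [normSq_eq_conj_mul_self, normSq_eq_conj_mul_self]
      linear_combination h00
    exact_mod_cast h
  have hn2 : Complex.normSq d = 1 + Complex.normSq b := by
    have h : (Complex.normSq d : ℂ) = 1 + Complex.normSq b := by
      rw [normSq_eq_conj_mul_self, normSq_eq_conj_mul_self]
      linear_combination -h11
    exact_mod_cast h
  have h01' : (starRingEnd ℂ) a * b = (starRingEnd ℂ) c * d := by linear_combination h01
  have hbc : ‖b‖ = ‖c‖ := by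
    have habs01 : ‖a‖ * ‖b‖ = ‖c‖ * ‖d‖ := by
      have := congrArg (‖·‖) h01'
      simpa [map_mul, Complex.norm_conj] using this
    have hsq : ‖b‖ ^ 2 = ‖c‖ ^ 2 := by
      have h2 := congrArg (· ^ 2) habs01
      simp only [mul_pow] at h2
      have e1 : ‖a‖ ^ 2 = 1 + ‖c‖ ^ 2 := by
        rw [Complex.sq_norm, Complex.sq_norm, hn1]
      have e2 : ‖d‖ ^ 2 = 1 + ‖b‖ ^ 2 := by
        rw [Complex.sq_norm, Complex.sq_norm, hn2]
      nlinarith [h2, e1, e2]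
    rw [← Real.sqrt_sq (norm_nonneg b), hsq, Real.sqrt_sq (norm_nonneg c)]
  set r : ℝ := ‖c‖ with hr_def
  have hr : 0 ≤ r := norm_nonneg _
  set s : ℝ := Real.sqrt (1 + r ^ 2) with hs_def
  have hs2 : s ^ 2 = 1 + r ^ 2 := Real.sq_sqrt (by positivity)
  have hspos : 0 < s := Real.sqrt_pos.2 (by positivity)
  have habs_a : ‖a‖ = s := by
    rw [← Real.sqrt_sq (norm_nonneg a), Complex.sq_norm, hn1, hs_def,
      ← Complex.sq_norm c]
  have habs_d : ‖d‖ = s := by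
    rw [← Real.sqrt_sq (norm_nonneg d), Complex.sq_norm, hn2, hs_def,
      ← Complex.sq_norm b, hbc]
  have ha0 : a ≠ 0 := by
    intro h; rw [h, norm_zero] at habs_a; exact absurd habs_a.symm (ne_of_gt hspos)
  have hd0 : d ≠ 0 := by
    intro h; rw [h, norm_zero] at habs_d; exact absurd habs_d.symm (ne_of_gt hspos)
  have hsC : ((s : ℝ) : ℂ) ≠ 0 := by exact_mod_cast ne_of_gt hspos
  have eα : exp (arg a * I) = a / s := by
    rw [eq_div_iff hsC, mul_comm, ← habs_a, Complex.norm_mul_exp_arg_mul_I]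
  have eβ : exp (arg d * I) = d / s := by
    rw [eq_div_iff hsC, mul_comm, ← habs_d, Complex.norm_mul_exp_arg_mul_I]
  have hargIcc : ∀ z : ℂ, arg z ∈ Set.Icc (-Real.pi) Real.pi := fun z =>
    ⟨(Complex.neg_pi_lt_arg z).le, Complex.arg_le_pi z⟩
  have g00 : a = exp (arg a * I) * ((s : ℝ) : ℂ) := by rw [eα]; field_simp
  have g11 : d = exp (arg d * I) * ((s : ℝ) : ℂ) := by rw [eβ]; field_simp
  by_cases hc : c = 0
  · -- diagonal case, r = 0
    have hrz : r = 0 := by rw [hr_def, hc, norm_zero]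
    have hb0 : b = 0 := norm_eq_zero.1 (by rw [hbc]; exact hrz)
    have hUeq : U = !![exp (arg a * I) * ((Real.sqrt (1 + r ^ 2) : ℝ) : ℂ),
        exp ((arg d + 0) * I) * ((r : ℝ) : ℂ);
        exp ((arg a - 0) * I) * ((r : ℝ) : ℂ),
        exp (arg d * I) * ((Real.sqrt (1 + r ^ 2) : ℝ) : ℂ)] := by
      have hr0C : ((r : ℝ) : ℂ) = 0 := by exact_mod_cast hrz
      rw [Matrix.eta_fin_two U, ← ha_def, ← hb_def, ← hc_def, ← hd_def, hb0, hc, ← hs_def,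
        hr0C, mul_zero, mul_zero, ← g00, ← g11]
    exact ⟨r, arg a, arg d, 0, hr, hargIcc a, hargIcc d,
      ⟨neg_nonpos.2 Real.pi_nonneg, Real.pi_nonneg⟩, hUeq,
      by rw [hUeq]; exact aux_norm14 r (arg a) (arg d) 0 hr⟩
  · -- generic case
    have hrpos : 0 < r := by
      rw [hr_def]; exact norm_pos_iff.2 hc
    have hrC : ((r : ℝ) : ℂ) ≠ 0 := by exact_mod_cast ne_of_gt hrpos
    have eδ : exp (arg (a / c) * I) = a * r / (c * s) := by
      have habs_ac : ‖a / c‖ = s / r := by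
        rw [norm_div, habs_a, ← hr_def]
      have h1 := Complex.norm_mul_exp_arg_mul_I (a / c)
      rw [habs_ac] at h1
      field_simp at h1
      rw [eq_div_iff (mul_ne_zero hc hsC)]
      have h1' : ((s / r : ℝ) : ℂ) * (r : ℂ) = s := by push_cast; field_simp
      linear_combination (r : ℂ) * h1 - c * exp (arg (a / c) * I) * h1'
    have hna : ((s : ℝ) : ℂ) ^ 2 = (starRingEnd ℂ) a * a := by
      rw [← normSq_eq_conj_mul_self]
      have : s ^ 2 = Complex.normSq a := by rw [hs2, hn1, ← Complex.sq_norm c]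
      exact_mod_cast this
    have hnc : ((r : ℝ) : ℂ) ^ 2 = (starRingEnd ℂ) c * c := by
      rw [← normSq_eq_conj_mul_self]
      have : r ^ 2 = Complex.normSq c := by rw [hr_def, Complex.sq_norm]
      exact_mod_cast this
    have e01 : b * c * ((s : ℝ) : ℂ) ^ 2 = d * a * ((r : ℝ) : ℂ) ^ 2 := by
      linear_combination a * c * h01' + b * c * hna - d * a * hnc
    have g01 : b = exp ((arg d + arg (a / c)) * I) * ((r : ℝ) : ℂ) := by
      rw [add_mul, Complex.exp_add, eβ, eδ]
      field_simp
      linear_combination e01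
    have g10 : c = exp ((arg a - arg (a / c)) * I) * ((r : ℝ) : ℂ) := by
      rw [sub_mul, Complex.exp_sub, eα, eδ]
      field_simp
    have hUeq : U = !![exp (arg a * I) * ((Real.sqrt (1 + r ^ 2) : ℝ) : ℂ),
        exp ((arg d + arg (a / c)) * I) * ((r : ℝ) : ℂ);
        exp ((arg a - arg (a / c)) * I) * ((r : ℝ) : ℂ),
        exp (arg d * I) * ((Real.sqrt (1 + r ^ 2) : ℝ) : ℂ)] := by
      rw [Matrix.eta_fin_two U, ← ha_def, ← hb_def, ← hc_def, ← hd_def, ← hs_def,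
        ← g00, ← g01, ← g10, ← g11]
    exact ⟨r, arg a, arg d, arg (a / c), hr, hargIcc a, hargIcc d, hargIcc _, hUeq,
      by rw [hUeq]; exact aux_norm14 r (arg a) (arg d) (arg (a / c)) hr⟩
end

section
/- Every 2×2 complex matrix Ξ satisfying Ξ² = 1 and ηΞ positive definite, where η = diag(1, −1), has the form Ξ(r,θ) = [[√(1+r²), r e^{iθ}], [−r e^{−iθ}, −√(1+r²)]] for some r ≥ 0 and θ ∈ [−π, π], and its operator norm is ‖Ξ(r,θ)‖ = r + √(1+r²). -/
open scoped Matrix.Norms.L2Operator Matrix ComplexOrder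
open Complex

/-- Every `2×2` complex matrix `Ξ` with `Ξ² = 1` and `ηΞ` positive
definite, where `η = diag(1,-1)`, has the form
`Ξ(r,θ) = [[√(1+r²), r e^{iθ}], [-r e^{-iθ}, -√(1+r²)]]` for some `r ≥ 0` and
`θ ∈ [-π, π]`, and its (L²-)operator norm is `r + √(1+r²)`. -/

private lemma normAux2 (v : Fin 2 → ℂ) (s : ℝ) (hs : 0 ≤ s)
    (h0 : ‖v 0‖ ^ 2 + ‖v 1‖ ^ 2 = s ^ 2) :
    ‖(EuclideanSpace.equiv (Fin 2) ℂ).symm v‖ = s := by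
  rw [EuclideanSpace.norm_eq]
  simp only [Fin.sum_univ_two]
  have h1 : ((EuclideanSpace.equiv (Fin 2) ℂ).symm v) 0 = v 0 := rfl
  have h2 : ((EuclideanSpace.equiv (Fin 2) ℂ).symm v) 1 = v 1 := rfl
  rw [h1, h2, h0]
  exact Real.sqrt_sq hs

/-- helper above -/
theorem statement16 (Ξ : Matrix (Fin 2) (Fin 2) ℂ)
    (hΞ : Ξ * Ξ = 1) (hpos : (!![(1 : ℂ), 0; 0, -1] * Ξ).PosDef) :
    ∃ (r θ : ℝ), 0 ≤ r ∧ θ ∈ Set.Icc (-Real.pi) Real.pi ∧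
      Ξ = !![(Real.sqrt (1 + r ^ 2) : ℂ), (r : ℂ) * exp (θ * I);
             -(r : ℂ) * exp (-θ * I), -(Real.sqrt (1 + r ^ 2) : ℂ)] ∧
      ‖Ξ‖ = r + Real.sqrt (1 + r ^ 2) := by
  set a := Ξ 0 0 with ha'
  set b := Ξ 0 1 with hb'
  set c := Ξ 1 0 with hc'
  set d := Ξ 1 1 with hd'
  have hΞ2 : Ξ = !![a, b; c, d] := Matrix.etaExpand_eq Ξ ▸ rfl
  rw [hΞ2] at hΞ hpos
  have hM : !![(1 : ℂ), 0; 0, -1] * !![a, b; c, d] = !![a, b; -c, -d] := by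
    ext i j; fin_cases i <;> fin_cases j <;> simp [Matrix.mul_apply, Fin.sum_univ_two]
  rw [hM] at hpos
  have e11 : a * a + b * c = 1 := by
    have := congrFun (congrFun hΞ 0) 0
    simpa [Matrix.mul_apply, Fin.sum_univ_two, Matrix.one_apply] using this
  have e22 : c * b + d * d = 1 := by
    have := congrFun (congrFun hΞ 1) 1
    simpa [Matrix.mul_apply, Fin.sum_univ_two, Matrix.one_apply] using this
  have hherm := hpos.isHermitian
  have hbc : b = -(starRingEnd ℂ) c := by
    have := congrFun (congrFun hherm.symm 0) 1
    simpa [Matrix.conjTranspose_apply] using this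
  have had : a = (starRingEnd ℂ) a := by
    have := congrFun (congrFun hherm.symm 0) 0
    simpa [Matrix.conjTranspose_apply] using this
  have hdd : d = (starRingEnd ℂ) d := by
    have := congrFun (congrFun hherm.symm 1) 1
    simpa [Matrix.conjTranspose_apply, neg_eq_iff_eq_neg] using this
  have hpa : 0 < a := by
    have h := hpos.dotProduct_mulVec_pos (x := ![1, 0]) (by intro h; have := congrFun h 0; simp at this)
    simpa [dotProduct, Matrix.mulVec, Fin.sum_univ_two] using h
  have hpd : 0 < -d := by
    have h := hpos.dotProduct_mulVec_pos (x := ![0, 1]) (by intro h; have := congrFun h 1; simp at this)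
    simpa [dotProduct, Matrix.mulVec, Fin.sum_univ_two] using h
  -- basic real forms
  have hcb : c = -(starRingEnd ℂ) b := by rw [hbc]; simp
  have haRe : a = (a.re : ℂ) := (Complex.conj_eq_iff_re.mp had.symm).symm
  have hdRe : d = (d.re : ℂ) := (Complex.conj_eq_iff_re.mp hdd.symm).symm
  have haRepos : 0 < a.re := by
    rw [Complex.lt_def] at hpa; simpa using hpa.1
  have hdReneg : d.re < 0 := by
    rw [Complex.lt_def] at hpd; simp at hpd; linarith [hpd.1]
  set r : ℝ := ‖b‖ with hr'
  have hr : 0 ≤ r := norm_nonneg b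
  have haa : a * a = ((1 + r ^ 2 : ℝ) : ℂ) := by
    rw [hcb] at e11
    have : a * a = 1 + b * (starRingEnd ℂ) b := by ring_nf; ring_nf at e11; linear_combination e11
    rw [this, Complex.mul_conj]
    push_cast [Complex.normSq_eq_norm_sq]
    ring
  have haRe2 : a.re ^ 2 = 1 + r ^ 2 := by
    have := haa
    rw [haRe] at this
    exact_mod_cast (by push_cast at this ⊢; linear_combination this : ((a.re ^ 2 : ℝ) : ℂ) = ((1 + r ^ 2 : ℝ) : ℂ))
  have haSqrt : a.re = Real.sqrt (1 + r ^ 2) := by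
    rw [← haRe2, Real.sqrt_sq haRepos.le]
  have hdEq : d = -a := by
    have hdd2 : d * d = ((1 + r ^ 2 : ℝ) : ℂ) := by
      rw [hcb] at e22
      have h1 : d * d = 1 + (starRingEnd ℂ) b * b := by linear_combination e22
      rw [h1, Complex.conj_mul']
      push_cast [Complex.normSq_eq_norm_sq]
      simp [hr']
    have hdRe2 : d.re ^ 2 = a.re ^ 2 := by
      rw [haRe2]
      have := hdd2
      rw [hdRe] at this
      exact_mod_cast (by push_cast at this ⊢; linear_combination this :
        ((d.re ^ 2 : ℝ) : ℂ) = ((1 + r ^ 2 : ℝ) : ℂ))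
    have : d.re = -a.re := by
      rcases sq_eq_sq_iff_eq_or_eq_neg.mp hdRe2 with h | h
      · linarith
      · exact h
    rw [hdRe, haRe, this]; push_cast; ring
  obtain ⟨θ, hθmem, hb⟩ : ∃ θ : ℝ, θ ∈ Set.Icc (-Real.pi) Real.pi ∧
      b = (r : ℂ) * exp (θ * I) :=
    ⟨b.arg, ⟨(Complex.neg_pi_lt_arg b).le, Complex.arg_le_pi b⟩,
      (Complex.norm_mul_exp_arg_mul_I b).symm⟩
  refine ⟨r, θ, hr, hθmem, ?_, ?_⟩
  · rw [hΞ2]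
    have hcval : c = -(r : ℂ) * exp (-θ * I) := by
      rw [hcb]
      rw [hb]
      rw [map_mul, Complex.conj_ofReal]
      rw [← Complex.exp_conj, map_mul, Complex.conj_ofReal, Complex.conj_I]
      ring_nf
    rw [haRe, haSqrt, hdEq, haRe, haSqrt, ← hb, ← hcval]
  · -- norm computation
    rw [← haSqrt]
    set α := a.re with hα'
    have hbb : b * (starRingEnd ℂ) b = ((r ^ 2 : ℝ) : ℂ) := by
      rw [Complex.mul_conj]
      push_cast [Complex.normSq_eq_norm_sq]
      simp [hr']
    have hΞform : Ξ = !![(α : ℂ), b; -(starRingEnd ℂ) b, -(α : ℂ)] := by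
      rw [hΞ2, hcb, hdEq, haRe]
    have hαpos : 0 < α := haRepos
    have hα2 : α ^ 2 = 1 + r ^ 2 := haRe2
    have hbb2 : b * (starRingEnd ℂ) b = (r : ℂ) ^ 2 := by push_cast at hbb; exact hbb
    have hα2C : ((α : ℝ) : ℂ) ^ 2 = 1 + (r : ℂ) ^ 2 := by exact_mod_cast congrArg Complex.ofReal hα2
    set S : Matrix (Fin 2) (Fin 2) ℂ := !![0, b; (starRingEnd ℂ) b, 0] with hS'
    have hconj : Ξᴴ = !![(α : ℂ), -b; (starRingEnd ℂ) b, -(α : ℂ)] := by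
      rw [hΞform]
      ext i j
      fin_cases i <;> fin_cases j <;>
        simp [Matrix.conjTranspose_apply, Complex.conj_ofReal]
    have hprod : Ξᴴ * Ξ = ((1 + 2 * r ^ 2 : ℝ) : ℂ) • (1 : Matrix (Fin 2) (Fin 2) ℂ)
        + ((2 * α : ℝ) : ℂ) • S := by
      rw [hconj]
      conv_lhs => rw [hΞform]
      ext i j
      fin_cases i <;> fin_cases j <;>
        simp [Matrix.mul_apply, Fin.sum_univ_two, Matrix.one_apply, hS'] <;>
        push_cast <;>
        first
        | ring1
        | linear_combination hbb2 + hα2C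
        | linear_combination -hbb2 - hα2C
        | linear_combination hbb2 - hα2C
        | linear_combination -hbb2 + hα2C
    have hSH : Sᴴ = S := by
      ext i j
      fin_cases i <;> fin_cases j <;> simp [hS', Matrix.conjTranspose_apply]
    have hSS : Sᴴ * S = ((r ^ 2 : ℝ) : ℂ) • (1 : Matrix (Fin 2) (Fin 2) ℂ) := by
      rw [hSH]
      ext i j
      fin_cases i <;> fin_cases j <;>
        simp [Matrix.mul_apply, Fin.sum_univ_two, Matrix.one_apply, hS'] <;>
        push_cast <;>
        linear_combination hbb2
    have hone : ‖(1 : Matrix (Fin 2) (Fin 2) ℂ)‖ = 1 := norm_one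
    have hSnorm : ‖S‖ = r := by
      have h1 : ‖S‖ * ‖S‖ = r ^ 2 := by
        rw [← Matrix.l2_opNorm_conjTranspose_mul_self, hSS, norm_smul, hone]
        simp [Complex.norm_real, _root_.abs_of_nonneg (sq_nonneg r)]
      have h2 : ‖S‖ ^ 2 = r ^ 2 := by rw [sq]; exact h1
      rcases sq_eq_sq_iff_eq_or_eq_neg.mp h2 with h | h
      · exact h
      · nlinarith [norm_nonneg S, hr]
    have hupper : ‖Ξ‖ ≤ r + α := by
      have h1 : ‖Ξ‖ * ‖Ξ‖ ≤ (r + α) ^ 2 := by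
        rw [← Matrix.l2_opNorm_conjTranspose_mul_self, hprod]
        calc ‖((1 + 2 * r ^ 2 : ℝ) : ℂ) • (1 : Matrix (Fin 2) (Fin 2) ℂ)
              + ((2 * α : ℝ) : ℂ) • S‖
            ≤ ‖((1 + 2 * r ^ 2 : ℝ) : ℂ) • (1 : Matrix (Fin 2) (Fin 2) ℂ)‖
              + ‖((2 * α : ℝ) : ℂ) • S‖ := norm_add_le _ _
          _ = (1 + 2 * r ^ 2) + (2 * α) * r := by
              rw [norm_smul, norm_smul, hone, hSnorm, Complex.norm_real,
                Complex.norm_real, Real.norm_eq_abs, Real.norm_eq_abs,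
                _root_.abs_of_nonneg (by positivity : (0:ℝ) ≤ 1 + 2 * r ^ 2),
                _root_.abs_of_nonneg (by linarith : (0:ℝ) ≤ 2 * α)]
              ring
          _ = (r + α) ^ 2 := by nlinarith [hα2]
      calc ‖Ξ‖ = Real.sqrt (‖Ξ‖ * ‖Ξ‖) := by
              rw [Real.sqrt_mul_self (norm_nonneg _)]
        _ ≤ Real.sqrt ((r + α) ^ 2) := Real.sqrt_le_sqrt h1
        _ = r + α := Real.sqrt_sq (by positivity)
    have hlower : r + α ≤ ‖Ξ‖ := by
      rcases eq_or_lt_of_le hr with h0 | hrpos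
      · -- r = 0 case
        have hb0 : b = 0 := by
          have : ‖b‖ = 0 := by rw [← hr', ← h0]
          exact norm_eq_zero.mp this
        set x : EuclideanSpace ℂ (Fin 2) :=
          (EuclideanSpace.equiv (Fin 2) ℂ).symm ![1, 0] with hx'
        have hmv : Ξ *ᵥ x = ![(α : ℂ), 0] := by
          rw [hΞform, hb0]
          funext i
          fin_cases i <;>
            simp [hx', Matrix.mulVec, dotProduct, Fin.sum_univ_two]
        have hle := Matrix.l2_opNorm_mulVec Ξ x
        rw [hmv] at hle
        have h1 : ‖(EuclideanSpace.equiv (Fin 2) ℂ).symm ![(α : ℂ), 0]‖ = α :=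
          normAux2 _ _ hαpos.le (by
            simp [Complex.norm_real,
              _root_.abs_of_nonneg hαpos.le])
        have h2 : ‖x‖ = 1 := by
          rw [hx']
          exact normAux2 _ _ zero_le_one (by norm_num)
        rw [h1, h2, mul_one] at hle
        linarith
      · -- r > 0 case
        set x : EuclideanSpace ℂ (Fin 2) :=
          (EuclideanSpace.equiv (Fin 2) ℂ).symm ![b, (r : ℂ)] with hx'
        have hmv : Ξ *ᵥ x = ![((α + r : ℝ) : ℂ) * b, -((r * (α + r) : ℝ) : ℂ)] := by
          rw [hΞform]
          funext i
          fin_cases i <;>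
            simp [hx', Matrix.mulVec, dotProduct, Fin.sum_univ_two] <;>
            push_cast <;>
            first
            | ring1
            | linear_combination -hbb2
        have hle := Matrix.l2_opNorm_mulVec Ξ x
        rw [hmv] at hle
        have en0 : ‖((α + r : ℝ) : ℂ) * b‖ = (α + r) * r := by
          rw [norm_mul, Complex.norm_real, Real.norm_eq_abs,
            _root_.abs_of_nonneg (by linarith : (0:ℝ) ≤ α + r), ← hr']
        have en1 : ‖(-((r * (α + r) : ℝ) : ℂ))‖ = r * (α + r) := by
          rw [norm_neg, Complex.norm_real, Real.norm_eq_abs,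
            _root_.abs_of_nonneg (mul_nonneg hr (by linarith) : (0:ℝ) ≤ r * (α + r))]
        have h1 : ‖(EuclideanSpace.equiv (Fin 2) ℂ).symm
            ![((α + r : ℝ) : ℂ) * b, -((r * (α + r) : ℝ) : ℂ)]‖
            = (α + r) * (r * Real.sqrt 2) := by
          refine normAux2 _ _ (by positivity) ?_
          show ‖((α + r : ℝ) : ℂ) * b‖ ^ 2 + ‖(-((r * (α + r) : ℝ) : ℂ))‖ ^ 2 = _
          rw [en0, en1]
          have h2s : (Real.sqrt 2) ^ 2 = 2 := Real.sq_sqrt (by norm_num)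
          linear_combination (-(α + r) ^ 2 * r ^ 2) * h2s
        have h2 : ‖x‖ = r * Real.sqrt 2 := by
          rw [hx']
          refine normAux2 _ _ (by positivity) ?_
          show ‖b‖ ^ 2 + ‖((r : ℝ) : ℂ)‖ ^ 2 = _
          rw [Complex.norm_real, Real.norm_eq_abs, ← hr',
            _root_.abs_of_nonneg hr]
          have h2s : (Real.sqrt 2) ^ 2 = 2 := Real.sq_sqrt (by norm_num)
          linear_combination (-(r ^ 2)) * h2s
        rw [h1, h2] at hle
        have hx0 : 0 < r * Real.sqrt 2 := by positivity
        have h3 := le_of_mul_le_mul_right hle hx0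
        linarith
    linarith [hupper, hlower]
end

section
/- Let A and Γ be bounded self-adjoint operators on a Hilbert space with Γ² = 1 and AΓ = −ΓA. Then: (i) iAΓ is self-adjoint, so exp(πAΓ) is unitary; (ii) the operator ϑ(A) := −exp(πAΓ)Γ is a self-adjoint involution (ϑ(A)* = ϑ(A), ϑ(A)² = 1); (iii) λ ∈ σ(A) if and only if iλ ∈ σ(AΓ). -/
open ContinuousLinearMap

open NormedSpace in
/-- Let `A` and `Γ` be bounded self-adjoint operators on a complex Hilbert
space with `Γ² = 1` and `AΓ = -ΓA`.  Then: (i) `i·AΓ` is self-adjoint, so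
`E = exp(π·AΓ)` is unitary (`E* E = 1 = E E*`); (ii) `ϑ(A) = -exp(π·AΓ)·Γ` is a
self-adjoint involution; (iii) `λ ∈ σ(A)` iff `iλ ∈ σ(AΓ)`. -/
theorem statement19
    {H : Type*} [NormedAddCommGroup H] [InnerProductSpace ℂ H] [CompleteSpace H]
    (A Γ : H →L[ℂ] H) (hA : IsSelfAdjoint A) (hΓ : IsSelfAdjoint Γ)
    (hΓ_inv : Γ ∘L Γ = 1) (hanticomm : A ∘L Γ = -(Γ ∘L A)) :
    -- (i) `i·AΓ` is self-adjoint and `exp(π·AΓ)` is unitary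
    IsSelfAdjoint (Complex.I • (A ∘L Γ)) ∧
    (adjoint (NormedSpace.exp ((Real.pi : ℂ) • (A ∘L Γ)))) ∘L
        NormedSpace.exp ((Real.pi : ℂ) • (A ∘L Γ)) = 1 ∧
    NormedSpace.exp ((Real.pi : ℂ) • (A ∘L Γ)) ∘L
        (adjoint (NormedSpace.exp ((Real.pi : ℂ) • (A ∘L Γ)))) = 1 ∧
    -- (ii) `ϑ(A) = -exp(π·AΓ)Γ` is a self-adjoint involution
    IsSelfAdjoint (-(NormedSpace.exp ((Real.pi : ℂ) • (A ∘L Γ)) ∘L Γ)) ∧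
    (-(NormedSpace.exp ((Real.pi : ℂ) • (A ∘L Γ)) ∘L Γ)) ∘L
        (-(NormedSpace.exp ((Real.pi : ℂ) • (A ∘L Γ)) ∘L Γ)) = 1 ∧
    -- (iii) spectral relation
    (∀ lam : ℂ, lam ∈ spectrum ℂ A ↔ Complex.I * lam ∈ spectrum ℂ (A ∘L Γ)) := by
  have hmul : ∀ f g : H →L[ℂ] H, f ∘L g = f * g := fun _ _ => rfl
  set B : H →L[ℂ] H := A ∘L Γ with hB
  have hΓ2 : Γ * Γ = 1 := hΓ_inv
  have hΓA : Γ * A = -B := by rw [hanticomm, neg_neg, hmul]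
  have hBmul : B = A * Γ := hmul A Γ
  have hBstar : star B = -B := by
    rw [hBmul, star_mul, hΓ.star_eq, hA.star_eq, hΓA, hBmul]
  have hΓB : Γ * B = -A := by
    rw [hBmul, ← mul_assoc, hΓA, hBmul, neg_mul, mul_assoc, hΓ2, mul_one]
  have hΓBΓ : Γ * B * Γ = -B := by
    rw [hΓB, neg_mul, ← hBmul]
  -- the exponential
  set πB : H →L[ℂ] H := (Real.pi : ℂ) • B with hπB
  have hπBstar : star πB = -πB := by
    rw [hπB, star_smul, hBstar, Complex.star_def, Complex.conj_ofReal, smul_neg]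
  set E : H →L[ℂ] H := NormedSpace.exp πB with hE
  have hEstar : star E = NormedSpace.exp (-πB) := by
    rw [hE, NormedSpace.star_exp, hπBstar]
  letI : NormedAlgebra ℚ (H →L[ℂ] H) := .restrictScalars ℚ ℂ (H →L[ℂ] H)
  have hEmul : NormedSpace.exp (-πB) * E = 1 := by
    rw [hE, ← NormedSpace.exp_add_of_commute ((Commute.refl πB).neg_left),
      neg_add_cancel, NormedSpace.exp_zero]
  have hEmul' : E * NormedSpace.exp (-πB) = 1 := by
    rw [hE, ← NormedSpace.exp_add_of_commute ((Commute.refl πB).neg_right),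
      add_neg_cancel, NormedSpace.exp_zero]
  -- conjugation of exp by Γ
  set u : (H →L[ℂ] H)ˣ := ⟨Γ, Γ, hΓ2, hΓ2⟩ with hu
  have hΓEΓ : Γ * E * Γ = NormedSpace.exp (-πB) := by
    have hΓπBΓ : Γ * πB * Γ = -πB := by
      rw [hπB, mul_smul_comm, smul_mul_assoc, hΓBΓ, smul_neg]
    have := NormedSpace.exp_units_conj u πB
    simp only [hu, Units.inv_mk] at this
    rw [← hΓπBΓ, this]
  have hΓEcomm : Γ * NormedSpace.exp (-πB) = E * Γ := by
    have : Γ * (Γ * E * Γ) = Γ * NormedSpace.exp (-πB) := by rw [hΓEΓ]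
    rw [← this, ← mul_assoc, ← mul_assoc, hΓ2, one_mul]
  refine ⟨?_, ?_, ?_, ?_, ?_, ?_⟩
  · -- (i) self-adjointness of i•B
    rw [IsSelfAdjoint, star_smul, hBstar, Complex.star_def, Complex.conj_I, neg_smul, smul_neg,
      neg_neg]
  · rw [← star_eq_adjoint, hmul, hEstar, hEmul]
  · rw [← star_eq_adjoint, hmul, hEstar, hEmul']
  · -- ϑ self-adjoint
    rw [IsSelfAdjoint, hmul, star_neg, star_mul, hΓ.star_eq, hEstar, hΓEcomm]
  · -- involution
    rw [hmul, neg_mul_neg]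
    calc E * Γ * (E * Γ) = E * (Γ * E * Γ) := by rw [mul_assoc, ← mul_assoc Γ E Γ]
      _ = 1 := by rw [hΓEΓ, hEmul']
  · -- (iii)
    intro lam
    set c : H →L[ℂ] H := algebraMap ℂ (H →L[ℂ] H) lam with hc
    set c' : H →L[ℂ] H := algebraMap ℂ (H →L[ℂ] H) (Complex.I * lam) with hc'
    have hΓAΓ : Γ * A * Γ = -A := by
      rw [hΓA, neg_mul, hBmul, mul_assoc, hΓ2, mul_one]
    have hB2 : B * B = -(A * A) := by
      rw [hBmul, mul_assoc, ← mul_assoc Γ A Γ, hΓAΓ, mul_neg]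
    have hcomm : ∀ T : H →L[ℂ] H, c * T = T * c := fun T => Algebra.commutes lam T
    have hcomm' : ∀ T : H →L[ℂ] H, c' * T = T * c' := fun T => Algebra.commutes _ T
    have hconjUnit : ∀ T : H →L[ℂ] H, IsUnit (Γ * T * Γ) ↔ IsUnit T := by
      intro T
      rw [mul_assoc]
      exact (Units.isUnit_units_mul u _).trans (Units.isUnit_mul_units T u)
    have hA_sym : IsUnit (c - A) ↔ IsUnit (c + A) := by
      have h1 : Γ * (c - A) * Γ = c + A := by
        rw [mul_sub, sub_mul, hΓAΓ, sub_neg_eq_add, ← hcomm Γ, mul_assoc, hΓ2, mul_one]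
      rw [← h1, hconjUnit]
    have hB_sym : IsUnit (c' - B) ↔ IsUnit (c' + B) := by
      have h1 : Γ * (c' - B) * Γ = c' + B := by
        rw [mul_sub, sub_mul, hΓBΓ, sub_neg_eq_add, ← hcomm' Γ, mul_assoc, hΓ2, mul_one]
      rw [← h1, hconjUnit]
    have hprod : (c' - B) * (c' + B) = -((c - A) * (c + A)) := by
      have hc'2 : c' * c' = -(c * c) := by
        rw [hc, hc', ← map_mul, ← map_mul, ← map_neg]
        congr 1
        have : Complex.I * lam * (Complex.I * lam) = Complex.I * Complex.I * (lam * lam) := by ring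
        rw [this, Complex.I_mul_I]; ring
      have e1 : (c' - B) * (c' + B) = c' * c' - B * B := by
        rw [sub_mul, mul_add, mul_add, hcomm' B]
        abel
      have e2 : (c - A) * (c + A) = c * c - A * A := by
        rw [sub_mul, mul_add, mul_add, hcomm A]
        abel
      rw [e1, e2, hc'2, hB2]
      abel
    have hcommA : Commute (c - A) (c + A) := by
      unfold Commute SemiconjBy
      rw [sub_mul, mul_add, mul_add, hcomm A, add_mul, mul_sub, mul_sub, hcomm A]
      abel
    have hcommB : Commute (c' - B) (c' + B) := by
      unfold Commute SemiconjBy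
      rw [sub_mul, mul_add, mul_add, hcomm' B, add_mul, mul_sub, mul_sub, hcomm' B]
      abel
    rw [spectrum.mem_iff, spectrum.mem_iff, not_iff_not, ← hc, ← hc']
    constructor
    · intro h
      have h2 : IsUnit ((c - A) * (c + A)) := hcommA.isUnit_mul_iff.2 ⟨h, hA_sym.1 h⟩
      have h3 : IsUnit ((c' - B) * (c' + B)) := by rw [hprod]; exact h2.neg
      exact (hcommB.isUnit_mul_iff.1 h3).1
    · intro h
      have h2 : IsUnit ((c' - B) * (c' + B)) := hcommB.isUnit_mul_iff.2 ⟨h, hB_sym.1 h⟩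
      have h3 : IsUnit ((c - A) * (c + A)) := by
        have := h2.neg; rwa [hprod, neg_neg] at this
      exact (hcommA.isUnit_mul_iff.1 h3).1
end
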